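/- arXiv:2004.11719 — 8 statements merged into one kernel-verified Lean document; each statement's English description precedes it below -/
import Mathlib

section
/- Every comeager subset of Cantor space contains the body of a Silver tree: if Y ⊆ 2^ω is comeager (its complement is meager), then there exists a Silver tree T such that [T] ⊆ Y. -/
/-- `T` is a tree of finite binary sequences: closed under initial segments. -/
def IsTree (T : Set (List Bool)) : Prop :=
  ∀ t ∈ T, ∀ k : ℕ, t.take k ∈ T

/-- `t` is a splitting node of `T`: it lies in `T` and both its one-bit extensions do. -/
def SplitNode (T : Set (List Bool)) (t : List Bool) : Prop :=
  t ∈ T ∧ t ++ [false] ∈ T ∧ t ++ [true] ∈ T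

/-- `T` is a perfect tree: a nonempty tree in which every node extends to a splitting node. -/
def IsPerfect (T : Set (List Bool)) : Prop :=
  IsTree T ∧ T.Nonempty ∧ ∀ t ∈ T, ∃ s, t <+: s ∧ SplitNode T s

/-- `T` is a Silver (uniform perfect) tree: perfect, and nodes of equal length
have the same one-bit extensions in `T`. -/
def IsSilver (T : Set (List Bool)) : Prop :=
  IsPerfect T ∧ ∀ s ∈ T, ∀ t ∈ T, s.length = t.length →
    ∀ i : Bool, (s ++ [i] ∈ T ↔ t ++ [i] ∈ T)

/-- The body `[T]` of a tree: all infinite branches whose finite initial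
segments all lie in `T`. -/
def body (T : Set (List Bool)) : Set (ℕ → Bool) :=
  { x | ∀ n : ℕ, (List.ofFn fun i : Fin n => x i) ∈ T }

/-!
A pattern `f : ℕ → Option Bool` with infinitely many holes (`none`) determines a Silver tree,
whose branches are the sequences agreeing with `f` wherever `f` is defined. Write the comeager set
as containing `⋂ n, U n` with every `U n` dense open and build `f` by fusion: at stage `n` a finite
pattern gets a new hole followed by fixed bits, chosen so that every filling of all holes so far
lies in `U n`. Fillings of finitely many holes are obtained by flipping bits on finitely many sets,
and flips are homeomorphisms, so the points all of whose flips lie in `U n` form a dense open set.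
-/

open PiNat

def flipOn {ι : Type*} [DecidableEq ι] (A : Finset ι) (x : ι → Bool) : ι → Bool :=
  fun i => if i ∈ A then !x i else x i

section flipOn

variable {ι : Type*} [DecidableEq ι]

lemma flipOn_involutive (A : Finset ι) : Function.Involutive (flipOn A) := by
  intro x
  funext i
  by_cases h : i ∈ A <;> simp [flipOn, h]

lemma continuous_flipOn (A : Finset ι) : Continuous (flipOn A) :=
  continuous_pi fun i =>
    (continuous_of_discreteTopology (f := fun b : Bool => if i ∈ A then !b else b)).comp
      (continuous_apply i)

lemma isOpenMap_flipOn (A : Finset ι) : IsOpenMap (flipOn A) := fun s hs => by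
  rw [(flipOn_involutive A).image_eq_preimage_symm]
  exact hs.preimage (continuous_flipOn A)

variable {U : Set (ι → Bool)}

lemma isOpen_iInter_preimage_flipOn (hU : IsOpen U) (P : Finset ι) :
    IsOpen (⋂ A ∈ P.powerset, flipOn A ⁻¹' U) :=
  isOpen_biInter_finset fun A _ => hU.preimage (continuous_flipOn A)

lemma dense_iInter_preimage_flipOn (hUo : IsOpen U) (hUd : Dense U) (P : Finset ι) :
    Dense (⋂ A ∈ P.powerset, flipOn A ⁻¹' U) :=
  dense_biInter_of_isOpen (fun A _ => hUo.preimage (continuous_flipOn A))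
    P.powerset.countable_toSet fun A _ => hUd.preimage (isOpenMap_flipOn A)

end flipOn

lemma exists_cylinder_subset {E : ℕ → Type*} [∀ n, TopologicalSpace (E n)]
    [∀ n, DiscreteTopology (E n)] {W : Set (∀ n, E n)} (hW : IsOpen W) {z : ∀ n, E n}
    (hz : z ∈ W) : ∃ n, cylinder z n ⊆ W := by
  obtain ⟨_, ⟨y, n, rfl⟩, hzy, hsub⟩ :=
    (isTopologicalBasis_cylinders E).exists_subset_of_mem_open hz hW
  exact ⟨n, by rwa [mem_cylinder_iff_eq.1 hzy]⟩

def silverTree (f : ℕ → Option Bool) : Set (List Bool) :=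
  {t | ∀ i (hi : i < t.length), ∀ b ∈ f i, t[i] = b}

section silverTree

variable {f : ℕ → Option Bool}

lemma isTree_silverTree : IsTree (silverTree f) := fun t ht k i hi b hb => by
  rw [List.getElem_take]
  exact ht i _ b hb

lemma append_singleton_mem_silverTree_iff {t : List Bool} {c : Bool} :
    t ++ [c] ∈ silverTree f ↔ t ∈ silverTree f ∧ ∀ b ∈ f t.length, c = b := by
  constructor
  · intro h
    refine ⟨fun i hi b hb => ?_, fun b hb => ?_⟩
    · have := h i (by simp; omega) b hb
      rwa [List.getElem_append_left hi] at this
    · simpa using h t.length (by simp) b hb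
  · rintro ⟨ht, hc⟩ i hi b hb
    rcases Nat.lt_or_ge i t.length with hit | hit
    · rw [List.getElem_append_left hit]
      exact ht i hit b hb
    · obtain rfl : i = t.length := by simp at hi; omega
      simpa using hc b hb

lemma exists_prefix_mem_silverTree_length_eq {t : List Bool} (ht : t ∈ silverTree f) {n : ℕ}
    (hn : t.length ≤ n) : ∃ s ∈ silverTree f, t <+: s ∧ s.length = n := by
  induction n, hn using Nat.le_induction with
  | base => exact ⟨t, ht, List.prefix_refl t, rfl⟩
  | succ n _ ih =>
    obtain ⟨s, hs, hts, rfl⟩ := ih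
    refine ⟨s ++ [(f s.length).getD false], ?_, hts.trans (List.prefix_append _ _), by simp⟩
    exact append_singleton_mem_silverTree_iff.2 ⟨hs, fun b hb => by simp [Option.mem_def.1 hb]⟩

lemma splitNode_silverTree {s : List Bool} (hs : s ∈ silverTree f) (h : f s.length = none) :
    SplitNode (silverTree f) s :=
  ⟨hs, append_singleton_mem_silverTree_iff.2 ⟨hs, by simp [h]⟩,
    append_singleton_mem_silverTree_iff.2 ⟨hs, by simp [h]⟩⟩

theorem isSilver_silverTree (hf : {i | f i = none}.Infinite) : IsSilver (silverTree f) := by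
  refine ⟨⟨isTree_silverTree, ⟨[], fun i hi => absurd hi (Nat.not_lt_zero i)⟩, fun t ht => ?_⟩,
    fun s hs t ht hst c => ?_⟩
  · obtain ⟨n, hn, htn⟩ := hf.exists_gt t.length
    obtain ⟨s, hs, hts, rfl⟩ := exists_prefix_mem_silverTree_length_eq ht htn.le
    exact ⟨s, hts, splitNode_silverTree hs hn⟩
  · simp only [append_singleton_mem_silverTree_iff, hs, ht, true_and, hst]

lemma apply_eq_of_mem_body_silverTree {x : ℕ → Bool} (hx : x ∈ body (silverTree f)) {i : ℕ}
    {b : Bool} (hb : b ∈ f i) : x i = b := by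
  have := hx (i + 1) i (by simp) b hb
  rwa [List.getElem_ofFn] at this

end silverTree

/-- A finite Silver condition: coordinate `i < len` is fixed to `b` if `val i = some b` and is
free if `val i = none`. -/
structure SilverCondition where
  len : ℕ
  val : ℕ → Option Bool

namespace SilverCondition

def cyl (p : SilverCondition) : Set (ℕ → Bool) :=
  {x | ∀ i < p.len, ∀ b ∈ p.val i, x i = b}

def free (p : SilverCondition) : Finset ℕ :=
  (Finset.range p.len).filter fun i => p.val i = none

structure Extends (q p : SilverCondition) : Prop where
  len_lt : p.len < q.len
  val_eq : ∀ i < p.len, q.val i = p.val i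
  val_len : q.val p.len = none

lemma cylinder_subset_cyl {p : SilverCondition} {x : ℕ → Bool} (hx : x ∈ p.cyl) :
    cylinder x p.len ⊆ p.cyl := fun _ hy i hi b hb => (hy i hi).trans (hx i hi b hb)

lemma isOpen_cyl (p : SilverCondition) : IsOpen p.cyl :=
  isOpen_iff_forall_mem_open.2 fun x hx =>
    ⟨_, cylinder_subset_cyl hx, isOpen_cylinder _ x p.len, self_mem_cylinder x p.len⟩

lemma cyl_nonempty (p : SilverCondition) : p.cyl.Nonempty :=
  ⟨fun i => (p.val i).getD false, fun i _ b hb => by simp [Option.mem_def.1 hb]⟩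

/-- Every `x ∈ p.cyl` is a flip, on free coordinates, of a point of `cylinder z p.len`. -/
lemma cyl_subset_of_forall_flipOn {p : SilverCondition} {U : Set (ℕ → Bool)} {z : ℕ → Bool}
    (hz : z ∈ p.cyl) (h : ∀ A ⊆ p.free, cylinder z p.len ⊆ flipOn A ⁻¹' U) : p.cyl ⊆ U := by
  intro x hx
  set A := p.free.filter fun i => x i ≠ z i
  have hflip : flipOn A x ∈ cylinder z p.len := by
    intro i hi
    by_cases hxz : x i = z i
    · simp [flipOn, A, hxz]
    · have hfree : p.val i = none := by
        cases hv : p.val i with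
        | none => rfl
        | some b => exact absurd ((hx i hi b hv).trans (hz i hi b hv).symm) hxz
      have hiA : i ∈ A := by simp [A, free, hi, hfree, hxz]
      simpa [flipOn, hiA, Bool.eq_not_iff] using hxz
  simpa [flipOn_involutive A x] using h A (Finset.filter_subset _ _) hflip

lemma exists_extends_cyl_subset {U : Set (ℕ → Bool)} (hUo : IsOpen U) (hUd : Dense U)
    (p : SilverCondition) : ∃ q : SilverCondition, q.Extends p ∧ q.cyl ⊆ U := by
  obtain ⟨z, hzp, hzW⟩ := (dense_iInter_preimage_flipOn hUo hUd (insert p.len p.free))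
    |>.inter_open_nonempty _ p.isOpen_cyl p.cyl_nonempty
  obtain ⟨n, hn⟩ := exists_cylinder_subset (isOpen_iInter_preimage_flipOn hUo _) hzW
  let q : SilverCondition := ⟨max n (p.len + 1),
    fun i => if i < p.len then p.val i else if i = p.len then none else some (z i)⟩
  have hzq : z ∈ q.cyl := by
    intro i hi b hb
    simp only [q] at hb
    split_ifs at hb with h1 h2
    · exact hzp i h1 b hb
    · simp at hb
    · exact Option.some_injective _ hb
  have hfree : q.free ⊆ insert p.len p.free := by
    intro i hi
    simp only [free, q, Finset.mem_filter, Finset.mem_range, Finset.mem_insert] at hi ⊢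
    split_ifs at hi with h1 h2
    · exact Or.inr ⟨h1, hi.2⟩
    · exact Or.inl h2
    · simp at hi
  refine ⟨q, ⟨by simp [q], fun i hi => by simp [q, hi], by simp [q]⟩,
    cyl_subset_of_forall_flipOn hzq fun A hA => ?_⟩
  exact (cylinder_anti z (le_max_left _ _)).trans
    (hn.trans (Set.biInter_subset_of_mem (Finset.mem_powerset.2 (hA.trans hfree))))

def limit (s : ℕ → SilverCondition) (i : ℕ) : Option Bool :=
  (s (i + 1)).val i

section Fusion

variable {s : ℕ → SilverCondition}

lemma strictMono_len (hs : ∀ n, (s (n + 1)).Extends (s n)) : StrictMono fun n => (s n).len :=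
  strictMono_nat_of_lt_succ fun n => (hs n).len_lt

lemma val_eq_of_le (hs : ∀ n, (s (n + 1)).Extends (s n)) {k n i : ℕ} (hkn : k ≤ n)
    (hi : i < (s k).len) : (s n).val i = (s k).val i := by
  induction n, hkn using Nat.le_induction with
  | base => rfl
  | succ n hkn ih => rw [(hs n).val_eq i (hi.trans_le ((strictMono_len hs).monotone hkn)), ih]

lemma limit_eq (hs : ∀ n, (s (n + 1)).Extends (s n)) {n i : ℕ} (hi : i < (s n).len) :
    limit s i = (s n).val i := by
  have hi' : i < (s (i + 1)).len := (strictMono_len hs).id_le (i + 1)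
  rcases le_total n (i + 1) with h | h
  · exact val_eq_of_le hs h hi
  · exact (val_eq_of_le hs h hi').symm

lemma infinite_setOf_limit_eq_none (hs : ∀ n, (s (n + 1)).Extends (s n)) :
    {i | limit s i = none}.Infinite := by
  refine (Set.infinite_range_of_injective (strictMono_len hs).injective).mono ?_
  rintro _ ⟨n, rfl⟩
  change limit s _ = none
  rw [limit_eq hs (hs n).len_lt, (hs n).val_len]

lemma body_silverTree_limit_subset (hs : ∀ n, (s (n + 1)).Extends (s n)) (n : ℕ) :
    body (silverTree (limit s)) ⊆ (s n).cyl :=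
  fun _ hx i hi _ hb => apply_eq_of_mem_body_silverTree hx (by rwa [limit_eq hs hi])

end Fusion

end SilverCondition

theorem exists_isSilver_body_subset_iInter {U : ℕ → Set (ℕ → Bool)} (hUo : ∀ n, IsOpen (U n))
    (hUd : ∀ n, Dense (U n)) : ∃ T, IsSilver T ∧ body T ⊆ ⋂ n, U n := by
  choose next hnext hnextU using fun n => SilverCondition.exists_extends_cyl_subset (hUo n) (hUd n)
  let s : ℕ → SilverCondition := fun n => Nat.rec ⟨0, fun _ => none⟩ (fun k p => next k p) n
  have hs : ∀ n, (s (n + 1)).Extends (s n) := fun n => hnext n (s n)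
  exact ⟨_, isSilver_silverTree (SilverCondition.infinite_setOf_limit_eq_none hs),
    Set.subset_iInter fun n =>
      (SilverCondition.body_silverTree_limit_subset hs (n + 1)).trans (hnextU n (s n))⟩

/-- Every comeager subset of Cantor space contains the body of a Silver tree. -/
theorem comeager_contains_silver_body (Y : Set (ℕ → Bool)) (hY : IsMeagre Yᶜ) :
    ∃ T : Set (List Bool), IsSilver T ∧ body T ⊆ Y := by
  rw [IsMeagre, compl_compl, mem_residual] at hY
  obtain ⟨G, hGY, hG, hGd⟩ := hY
  obtain ⟨U, hUo, rfl⟩ := isGδ_iff_eq_iInter_nat.1 hG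
  obtain ⟨T, hT, hTU⟩ :=
    exists_isSilver_body_subset_iInter hUo fun n => hGd.mono (Set.iInter_subset U n)
  exact ⟨T, hT, hTU.trans hGY⟩
end

section
/- If X ⊆ 2^ω has the Baire property, then there exists a Silver tree T such that [T] ⊆ X or [T] ∩ X = ∅. -/
/-- `X` has the Baire property: it differs from an open set by a meager set. -/
def HasBaireProp (X : Set (ℕ → Bool)) : Prop :=
  ∃ U : Set (ℕ → Bool), IsOpen U ∧ IsMeagre (symmDiff X U)


/-- The basic clopen cylinder determined by a finite binary string. -/
def cyl (s : List Bool) : Set (ℕ → Bool) :=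
  { x | ∀ k, (h : k < s.length) → x k = s[k] }

lemma isOpen_cyl (s : List Bool) : IsOpen (cyl s) := by
  have : cyl s = Set.pi (↑(Finset.range s.length)) (fun k => {b | ∀ h : k < s.length, b = s[k]}) := by
    ext x
    simp only [cyl, Set.mem_setOf_eq, Set.mem_pi, Finset.coe_range, Set.mem_Iio]
    constructor
    · intro h k hk _; exact h k hk
    · intro h k hk; exact h k hk hk
  rw [this]
  refine isOpen_set_pi (Finset.finite_toSet _) (fun a _ => ?_)
  exact isOpen_discrete _

lemma cyl_nonempty (s : List Bool) : (cyl s).Nonempty := by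
  refine ⟨fun i => s.getD i false, fun k h => ?_⟩
  simp [List.getD_eq_getElem, h]

lemma cyl_append_subset (a b : List Bool) : cyl (a ++ b) ⊆ cyl a := by
  intro x hx k hk
  have hk' : k < (a ++ b).length := by simp; omega
  have := hx k hk'
  rwa [List.getElem_append_left hk] at this

lemma exists_cyl_ext (D : Set (ℕ → Bool)) (hDo : IsOpen D) (hDd : Dense D) (t : List Bool) :
    ∃ r : List Bool, cyl (t ++ r) ⊆ D := by
  obtain ⟨x, hxc, hxD⟩ := hDd.inter_open_nonempty _ (isOpen_cyl t) (cyl_nonempty t)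
  obtain ⟨I, u, hu, hI⟩ := isOpen_pi_iff.mp hDo x hxD
  set n : ℕ := max t.length ((I.sup id) + 1) with hn
  refine ⟨List.ofFn (fun i : Fin (n - t.length) => x (t.length + i)), ?_⟩
  intro y hy
  apply hI
  intro a ha
  have han : a < n := by
    have : a ≤ I.sup id := Finset.le_sup (f := id) ha
    omega
  have hlen : (t ++ List.ofFn (fun i : Fin (n - t.length) => x (t.length + i))).length = n := by
    simp; omega
  have hya : y a = x a := by
    rcases lt_or_ge a t.length with h | h
    · have := hy a (by omega : a < _)
      rw [List.getElem_append_left h] at this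
      rw [this]; exact (hxc a h).symm
    · have := hy a (by omega : a < _)
      rw [List.getElem_append_right h] at this
      rw [List.getElem_ofFn] at this
      simp only at this
      rw [this]
      congr 1
      omega
  rw [hya]
  exact (hu a ha).2

lemma exists_cyl_ext_list (D : Set (ℕ → Bool)) (hDo : IsOpen D) (hDd : Dense D)
    (L : List (List Bool)) : ∃ r : List Bool, ∀ s ∈ L, cyl (s ++ r) ⊆ D := by
  induction L with
  | nil => exact ⟨[], by simp⟩
  | cons a L ih =>
    obtain ⟨r₁, hr₁⟩ := ih
    obtain ⟨r₂, hr₂⟩ := exists_cyl_ext D hDo hDd (a ++ r₁)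
    refine ⟨r₁ ++ r₂, ?_⟩
    intro s hs
    rcases List.mem_cons.mp hs with rfl | hs
    · rw [← List.append_assoc]; exact hr₂
    · calc cyl (s ++ (r₁ ++ r₂)) ⊆ cyl (s ++ r₁) := by
            rw [← List.append_assoc]; exact cyl_append_subset _ _
        _ ⊆ D := hr₁ s hs

/-- All binary strings of a given length. -/
def allLists : ℕ → List (List Bool)
  | 0 => [[]]
  | n + 1 => (allLists n).flatMap (fun t => [t ++ [false], t ++ [true]])

lemma mem_allLists {s : List Bool} {n : ℕ} (h : s.length = n) : s ∈ allLists n := by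
  induction n generalizing s with
  | zero => simp [allLists, List.length_eq_zero_iff.mp h]
  | succ n ih =>
    have hne : s ≠ [] := by intro hs; simp [hs] at h
    have hdl : s.dropLast ∈ allLists n := ih (by simp [List.length_dropLast, h])
    rw [allLists, List.mem_flatMap]
    refine ⟨s.dropLast, hdl, ?_⟩
    have := List.dropLast_append_getLast hne
    rcases Bool.dichotomy (s.getLast hne) with hb | hb <;>
      · rw [← this, hb]; simp

lemma exists_cyl_ext_len (D : Set (ℕ → Bool)) (hDo : IsOpen D) (hDd : Dense D) (n : ℕ) :
    ∃ r : List Bool, ∀ s : List Bool, s.length = n → cyl (s ++ r) ⊆ D := by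
  obtain ⟨r, hr⟩ := exists_cyl_ext_list D hDo hDd (allLists n)
  exact ⟨r, fun s hs => hr s (mem_allLists hs)⟩

/-- The uniform tree coded by `c : ℕ → Option Bool` (`some b` = fixed bit, `none` = free). -/
def codeTree (c : ℕ → Option Bool) : Set (List Bool) :=
  { t | ∀ k, (h : k < t.length) → ∀ b, c k = some b → t[k] = b }

/-- The branches consistent with the code `c`. -/
def bodyC (c : ℕ → Option Bool) : Set (ℕ → Bool) :=
  { x | ∀ k b, c k = some b → x k = b }

lemma codeTree_append_mem {c : ℕ → Option Bool} {t : List Bool} (ht : t ∈ codeTree c)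
    (i : Bool) (hi : ∀ b, c t.length = some b → i = b) : t ++ [i] ∈ codeTree c := by
  intro k hk b hb
  rcases lt_or_ge k t.length with h | h
  · rw [List.getElem_append_left h]; exact ht k h b hb
  · have hk' : k = t.length := by simp at hk; omega
    subst hk'
    simpa using hi b hb

lemma codeTree_append_iff {c : ℕ → Option Bool} {t : List Bool} (ht : t ∈ codeTree c)
    (i : Bool) : t ++ [i] ∈ codeTree c ↔ ∀ b, c t.length = some b → i = b := by
  constructor
  · intro h b hb
    have := h t.length (by simp) b hb
    simpa using this
  · exact codeTree_append_mem ht i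

lemma isSilver_codeTree {c : ℕ → Option Bool} (hc : ∀ n, ∃ m, n ≤ m ∧ c m = none) :
    IsSilver (codeTree c) := by
  have htree : IsTree (codeTree c) := by
    intro t ht k j hj b hb
    rw [List.getElem_take]
    exact ht j (by simp at hj; omega) b hb
  refine ⟨⟨htree, ⟨[], by intro k h; simp at h⟩, ?_⟩, ?_⟩
  · -- perfect
    intro t ht
    obtain ⟨m, hm, hmn⟩ := hc t.length
    set s : List Bool := t ++ List.ofFn (fun j : Fin (m - t.length) =>
      ((c (t.length + j)).getD false)) with hs
    have hslen : s.length = m := by simp [hs]; omega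
    have hsmem : s ∈ codeTree c := by
      intro k hk b hb
      rcases lt_or_ge k t.length with h | h
      · simp only [hs]
        rw [List.getElem_append_left h]; exact ht k h b hb
      · simp only [hs]
        rw [List.getElem_append_right h, List.getElem_ofFn]
        simp only
        have : t.length + (k - t.length) = k := by omega
        rw [this, hb]
        rfl
    refine ⟨s, ⟨_, rfl⟩, hsmem, ?_, ?_⟩ <;>
    · apply codeTree_append_mem hsmem
      intro b hb
      rw [hslen, hmn] at hb
      exact absurd hb (by simp)
  · -- uniform
    intro s hs t ht hlen i
    rw [codeTree_append_iff hs, codeTree_append_iff ht, hlen]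

lemma body_codeTree_subset {c : ℕ → Option Bool} : body (codeTree c) ⊆ bodyC c := by
  intro x hx k b hb
  have := hx (k + 1) k (by simp) b hb
  rwa [List.getElem_ofFn] at this

lemma bodyC_subset_body {c : ℕ → Option Bool} : bodyC c ⊆ body (codeTree c) := by
  intro x hx n k hk b hb
  rw [List.getElem_ofFn]
  exact hx k b hb

lemma exists_code (D : ℕ → Set (ℕ → Bool)) (hDo : ∀ n, IsOpen (D n))
    (hDd : ∀ n, Dense (D n)) (s₀ : List Bool) :
    ∃ c : ℕ → Option Bool, (∀ n, ∃ m, n ≤ m ∧ c m = none) ∧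
      bodyC c ⊆ cyl s₀ ∧ ∀ n, bodyC c ⊆ D n := by
  choose r hr using fun n L => exists_cyl_ext_len (D n) (hDo n) (hDd n) L
  set p : ℕ → List (Option Bool) := fun n =>
    Nat.rec (s₀.map some) (fun n q => q ++ (r n q.length).map some ++ [none]) n with hp
  have hstep : ∀ n, p (n + 1) = p n ++ (r n (p n).length).map some ++ [none] := fun n => rfl
  have hmono : ∀ n, p n <+: p (n + 1) := by
    intro n
    rw [hstep]
    exact ((p n).prefix_append _).trans ((_ : List (Option Bool)).prefix_append _)
  have hprefix : ∀ n m, n ≤ m → p n <+: p m := by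
    intro n m hnm
    induction m, hnm using Nat.le_induction with
    | base => exact List.prefix_refl _
    | succ m _ ih => exact ih.trans (hmono m)
  have hlen : ∀ n, n ≤ (p n).length := by
    intro n
    induction n with
    | zero => exact Nat.zero_le _
    | succ n ih =>
      rw [hstep]
      simp only [List.length_append, List.length_map, List.length_singleton]
      omega
  set c : ℕ → Option Bool := fun k => (p (k + 1)).getD k none with hc
  have agree : ∀ n k, (h : k < (p n).length) → c k = (p n)[k] := by
    intro n k h
    have hk1 : k < (p (k + 1)).length := lt_of_lt_of_le (Nat.lt_succ_self k) (hlen (k + 1))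
    have hck : c k = (p (k + 1))[k] := List.getD_eq_getElem _ _ hk1
    rcases le_total n (k + 1) with hle | hle
    · rw [hck, ← List.IsPrefix.getElem (hprefix n (k + 1) hle) h]
    · rw [hck, List.IsPrefix.getElem (hprefix (k + 1) n hle) hk1]
  refine ⟨c, ?_, ?_, ?_⟩
  · -- infinitely many free coordinates
    intro n
    set q : List (Option Bool) := p n ++ (r n (p n).length).map some with hq
    refine ⟨q.length, ?_, ?_⟩
    · have := hlen n
      simp only [hq, List.length_append]
      omega
    · have hql : q.length < (p (n + 1)).length := by
        rw [hstep, ← hq]; simp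
      rw [agree (n + 1) q.length hql,
        List.getElem_of_eq (by rw [hstep n, hq]) hql (l' := q ++ [none])]
      simp
  · -- contained in the cylinder of the stem
    intro x hx k hk
    have hk0 : k < (p 0).length := by show k < (s₀.map some).length; simpa using hk
    apply hx k
    rw [agree 0 k hk0]
    show (s₀.map some)[k]'(by simpa using hk) = _
    rw [List.getElem_map]
  · -- contained in each dense open set
    intro n x hx
    set s : List Bool := List.ofFn (fun i : Fin (p n).length => x i) with hs
    have hslen : s.length = (p n).length := by simp [hs]
    apply hr n (p n).length s hslen
    intro k hk
    have hklen : k < (p n).length + (r n (p n).length).length := by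
      simpa [hslen] using hk
    rcases lt_or_ge k (p n).length with h | h
    · rw [List.getElem_append_left (by omega : k < s.length)]
      simp [hs]
    · rw [List.getElem_append_right (by omega : s.length ≤ k)]
      simp only [hslen]
      apply hx k
      have hk1 : k < (p (n + 1)).length := by
        rw [hstep]; simp; omega
      have hkq : k < (p n ++ (r n (p n).length).map some).length := by simp; omega
      rw [agree (n + 1) k hk1, List.getElem_of_eq (hstep n) hk1,
        List.getElem_append_left hkq,
        List.getElem_append_right (by omega : (p n).length ≤ k),
        List.getElem_map]

/-- If `X ⊆ 2^ω` has the Baire property, then there is a Silver tree whose body is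
contained in `X` or disjoint from `X`. -/
theorem baireProp_silver_body (X : Set (ℕ → Bool)) (hX : HasBaireProp X) :
    ∃ T : Set (List Bool), IsSilver T ∧ (body T ⊆ X ∨ body T ∩ X = ∅) := by
  obtain ⟨U, hUo, hUm⟩ := hX
  rw [IsMeagre, mem_residual_iff] at hUm
  obtain ⟨S, hSo, hSd, hSc, hSs⟩ := hUm
  obtain ⟨D, hD⟩ := (hSc.insert Set.univ).exists_eq_range (Set.insert_nonempty _ _)
  have hmemS : ∀ n, D n ∈ insert Set.univ S := fun n => hD ▸ Set.mem_range_self n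
  have hDo : ∀ n, IsOpen (D n) := by
    intro n
    rcases hmemS n with h | h
    · rw [h]; exact isOpen_univ
    · exact hSo _ h
  have hDd : ∀ n, Dense (D n) := by
    intro n
    rcases hmemS n with h | h
    · rw [h]; exact dense_univ
    · exact hSd _ h
  have hDs : ∀ x : ℕ → Bool, (∀ n, x ∈ D n) → x ∉ symmDiff X U := by
    intro x hx
    apply hSs
    intro t ht
    have : t ∈ Set.range D := by rw [← hD]; exact Set.mem_insert_of_mem _ ht
    obtain ⟨n, rfl⟩ := this
    exact hx n
  rcases U.eq_empty_or_nonempty with hU | ⟨x₀, hx₀⟩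
  · -- X is meager; the tree avoids X
    obtain ⟨c, hc, -, hcD⟩ := exists_code D hDo hDd []
    refine ⟨codeTree c, isSilver_codeTree hc, Or.inr ?_⟩
    rw [Set.eq_empty_iff_forall_notMem]
    rintro x ⟨hxT, hxX⟩
    have hx : ∀ n, x ∈ D n := fun n => hcD n (body_codeTree_subset hxT)
    have := hDs x hx
    rw [hU] at this
    apply this
    rw [Set.mem_symmDiff]
    exact Or.inl ⟨hxX, by simp⟩
  · -- X is comeager in a basic clopen set; the tree sits inside X
    obtain ⟨I, u, hu, hI⟩ := isOpen_pi_iff.mp hUo x₀ hx₀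
    set N : ℕ := I.sup id + 1 with hN
    set s₀ : List Bool := List.ofFn (fun i : Fin N => x₀ i) with hs₀
    have hcylU : cyl s₀ ⊆ U := by
      intro y hy
      apply hI
      intro a ha
      have haN : a < N := by
        have : a ≤ I.sup id := Finset.le_sup (f := id) ha
        omega
      have hlen : a < s₀.length := by simp [hs₀]; omega
      have := hy a hlen
      simp only [hs₀, List.getElem_ofFn] at this
      rw [this]
      exact (hu a ha).2
    obtain ⟨c, hc, hccyl, hcD⟩ := exists_code D hDo hDd s₀
    refine ⟨codeTree c, isSilver_codeTree hc, Or.inl ?_⟩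
    intro x hxT
    have hxb : x ∈ bodyC c := body_codeTree_subset hxT
    have hxU : x ∈ U := hcylU (hccyl hxb)
    have hx : ∀ n, x ∈ D n := fun n => hcD n hxb
    have hnd := hDs x hx
    by_contra hxX
    exact hnd (Set.mem_symmDiff.mpr (Or.inr ⟨hxU, hxX⟩))
end

section
/- Let Θ be a topologically reasonable family of subsets of 2^ω. Then every set in Θ is Silver measurable if and only if for every X ∈ Θ there exists a Silver tree T with [T] ⊆ X or [T] ∩ X = ∅. -/
/-- `X ⊆ 2^ω` is Silver measurable: inside every Silver tree there is a Silver
subtree whose body is contained in `X` or disjoint from `X`. -/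
def SilverMeasurable (X : Set (ℕ → Bool)) : Prop :=
  ∀ T : Set (List Bool), IsSilver T →
    ∃ T' : Set (List Bool), IsSilver T' ∧ T' ⊆ T ∧ (body T' ⊆ X ∨ body T' ∩ X = ∅)

/-- A family of subsets of Cantor space is topologically reasonable if it is closed
under continuous preimages and under intersections with closed sets. -/
def TopReasonable (Θ : Set (Set (ℕ → Bool))) : Prop :=
  (∀ X ∈ Θ, ∀ f : (ℕ → Bool) → (ℕ → Bool), Continuous f → f ⁻¹' X ∈ Θ) ∧
  (∀ X ∈ Θ, ∀ C : Set (ℕ → Bool), IsClosed C → X ∩ C ∈ Θ)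

/-!
A Silver tree is exactly the tree of sequences agreeing with a fixed `g` off an infinite set `A`
of splitting levels. Enumerating `A` increasingly, the map `x ↦ (x placed on A, g off A)` is a
homeomorphism of Cantor space onto the body of that tree, and it carries Silver trees
to Silver subtrees of it. So a global witness for the continuous preimage of `X` transports to a
witness for `X` inside any given Silver tree.
-/

def agreeOffTree (A : Set ℕ) (g : ℕ → Bool) : Set (List Bool) :=
  {t | ∀ n, (hn : n < t.length) → n ∉ A → t[n] = g n}

section AgreeOffTree

variable {A : Set ℕ} {g : ℕ → Bool}

lemma mem_agreeOffTree_append {t : List Bool} {b : Bool} :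
    t ++ [b] ∈ agreeOffTree A g ↔
      t ∈ agreeOffTree A g ∧ (t.length ∉ A → b = g t.length) := by
  constructor
  · intro h
    refine ⟨fun n hn hA => ?_, fun hA => by simpa using h t.length (by simp) hA⟩
    have h2 := h n (by simp; omega) hA
    rwa [List.getElem_append_left hn] at h2
  · rintro ⟨ht, hb⟩ n hn hA
    simp only [List.length_append, List.length_singleton] at hn
    rcases Nat.lt_or_ge n t.length with hlt | hge
    · rw [List.getElem_append_left hlt]
      exact ht n hlt hA
    · obtain rfl : n = t.length := by omega
      simpa using hb hA

lemma body_agreeOffTree : body (agreeOffTree A g) = {x | ∀ n ∉ A, x n = g n} := by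
  ext x
  refine ⟨fun h n hn => ?_, fun h n m hm hA => by simpa using h m hA⟩
  have hn' := h (n + 1) n (by simp) hn
  rw [List.getElem_ofFn] at hn'
  simpa using hn'

lemma isTree_agreeOffTree : IsTree (agreeOffTree A g) := by
  intro t ht k n hn hA
  rw [List.getElem_take]
  exact ht n (by simp at hn; omega) hA

lemma agreeOffTree_subset_agreeOffTree {A' : Set ℕ} {g' : ℕ → Bool} (hA : A' ⊆ A)
    (hg : ∀ n ∉ A, g' n = g n) : agreeOffTree A' g' ⊆ agreeOffTree A g := fun _ ht n hn hnA =>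
  (ht n hn fun h => hnA (hA h)).trans (hg n hnA)

lemma isSilver_agreeOffTree (hA : A.Infinite) : IsSilver (agreeOffTree A g) := by
  refine ⟨⟨isTree_agreeOffTree, ⟨[], fun n hn => by simp at hn⟩, fun t ht => ?_⟩,
    fun _ _ _ _ hlen i => by rw [mem_agreeOffTree_append, mem_agreeOffTree_append, hlen]; tauto⟩
  obtain ⟨m, hmA, hm⟩ := hA.exists_gt t.length
  -- extend `t` along `g` up to the level `m ∈ A`, where both bits are allowed
  set s := t ++ List.ofFn fun i : Fin (m - t.length) => g (t.length + i)
  have hs : s ∈ agreeOffTree A g := by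
    intro n hn hnA
    rcases Nat.lt_or_ge n t.length with hlt | hge
    · rw [List.getElem_append_left hlt]
      exact ht n hlt hnA
    · rw [List.getElem_append_right hge, List.getElem_ofFn]
      exact congrArg g (Nat.add_sub_cancel' hge)
  have hlen : s.length = m := by simp [s]; omega
  refine ⟨s, ⟨_, rfl⟩, hs, ?_, ?_⟩ <;>
    exact mem_agreeOffTree_append.2 ⟨hs, fun h => absurd (hlen ▸ hmA) h⟩

lemma eq_agreeOffTree_of_append_mem_iff {T : Set (List Bool)} (hT : IsTree T) (hnil : [] ∈ T)
    (hext : ∀ t ∈ T, ∀ i, t ++ [i] ∈ T ↔ (t.length ∉ A → i = g t.length)) :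
    T = agreeOffTree A g := by
  ext t
  induction t using List.reverseRecOn with
  | nil => exact ⟨fun _ n hn => absurd hn (by simp), fun _ => hnil⟩
  | append_singleton t b ih =>
    rw [mem_agreeOffTree_append]
    constructor
    · intro htb
      have ht : t ∈ T := by simpa using hT _ htb t.length
      exact ⟨ih.1 ht, (hext t ht b).1 htb⟩
    · rintro ⟨ht, hb⟩
      exact (hext t (ih.2 ht) b).2 hb

end AgreeOffTree

section SilverStructure

open Classical

variable {T : Set (List Bool)}

lemma IsSilver.nil_mem (hT : IsSilver T) : [] ∈ T := by
  obtain ⟨t, ht⟩ := hT.1.2.1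
  simpa using hT.1.1 t ht 0

lemma IsSilver.exists_append_mem (hT : IsSilver T) {t : List Bool} (ht : t ∈ T) :
    ∃ b : Bool, t ++ [b] ∈ T := by
  obtain ⟨s, ⟨u, rfl⟩, hs, hsf, -⟩ := hT.1.2.2 t ht
  cases u with
  | nil => exact ⟨false, by simpa using hsf⟩
  | cons b u =>
    refine ⟨b, ?_⟩
    simpa [List.take_append, List.take_of_length_le] using hT.1.1 _ hs (t.length + 1)

lemma IsSilver.exists_mem_length_eq (hT : IsSilver T) (n : ℕ) : ∃ t ∈ T, t.length = n := by
  induction n with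
  | zero => exact ⟨[], hT.nil_mem, rfl⟩
  | succ n ih =>
    obtain ⟨t, ht, rfl⟩ := ih
    obtain ⟨b, hb⟩ := hT.exists_append_mem ht
    exact ⟨t ++ [b], hb, by simp⟩

def splitLevels (T : Set (List Bool)) : Set ℕ :=
  {n | ∃ s, s.length = n ∧ SplitNode T s}

/-- The bit a node of `T` at level `n` is extended by when the level does not split. -/
noncomputable def nonsplitBit (T : Set (List Bool)) (n : ℕ) : Bool :=
  decide (∃ t ∈ T, t.length = n ∧ t ++ [true] ∈ T)

lemma IsSilver.splitLevels_infinite (hT : IsSilver T) : (splitLevels T).Infinite := by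
  refine Set.infinite_of_forall_exists_gt fun m => ?_
  obtain ⟨t, ht, hlen⟩ := hT.exists_mem_length_eq (m + 1)
  obtain ⟨s, ⟨u, rfl⟩, hsplit⟩ := hT.1.2.2 t ht
  exact ⟨_, ⟨_, rfl, hsplit⟩, by simp; omega⟩

lemma IsSilver.append_mem_iff (hT : IsSilver T) {t : List Bool} (ht : t ∈ T) (i : Bool) :
    t ++ [i] ∈ T ↔ (t.length ∉ splitLevels T → i = nonsplitBit T t.length) := by
  have hunif := hT.2
  constructor
  · intro hti hnot
    cases i with
    | true => simpa [nonsplitBit] using ⟨t, ht, rfl, hti⟩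
    | false =>
      simp only [nonsplitBit, Bool.false_eq, decide_eq_false_iff_not, not_exists, not_and]
      intro u hu hlen hut
      exact hnot ⟨t, rfl, ht, hti, (hunif u hu t ht hlen true).1 hut⟩
  · intro hi
    by_cases hsplit : t.length ∈ splitLevels T
    · obtain ⟨s, hlen, hs, hsf, hst⟩ := hsplit
      cases i with
      | false => exact (hunif s hs t ht hlen false).1 hsf
      | true => exact (hunif s hs t ht hlen true).1 hst
    · obtain rfl := hi hsplit
      obtain ⟨b, hb⟩ := hT.exists_append_mem ht
      by_cases hdef : ∃ u ∈ T, u.length = t.length ∧ u ++ [true] ∈ T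
      · obtain ⟨u, hu, hlen, hut⟩ := hdef
        rw [show nonsplitBit T t.length = true from decide_eq_true ⟨u, hu, hlen, hut⟩]
        exact (hunif u hu t ht hlen true).1 hut
      · cases b with
        | false => simpa [nonsplitBit, hdef] using hb
        | true => exact absurd ⟨t, ht, rfl, hb⟩ hdef

lemma IsSilver.eq_agreeOffTree (hT : IsSilver T) :
    T = agreeOffTree (splitLevels T) (nonsplitBit T) :=
  eq_agreeOffTree_of_append_mem_iff hT.1.1 hT.nil_mem fun _ ht => hT.append_mem_iff ht

end SilverStructure

section SpreadAlong

open Classical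

/-- Place the bits of `x` on the increasing enumeration of `A`, and fill the rest with `g`. -/
noncomputable def spreadAlong (A : Set ℕ) (g x : ℕ → Bool) : ℕ → Bool :=
  fun n => if n ∈ A then x (Nat.count (· ∈ A) n) else g n

variable {A : Set ℕ} {g : ℕ → Bool}

lemma continuous_spreadAlong : Continuous (spreadAlong A g) := by
  refine continuous_pi fun n => ?_
  by_cases hn : n ∈ A
  · simpa [spreadAlong, hn] using continuous_apply _
  · simpa [spreadAlong, hn] using continuous_const

lemma image_spreadAlong_body_agreeOffTree (hA : A.Infinite) (B : Set ℕ) (h : ℕ → Bool) :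
    spreadAlong A g '' body (agreeOffTree B h) =
      body (agreeOffTree (Nat.nth (· ∈ A) '' B) (spreadAlong A g h)) := by
  have hnth : ∀ k, Nat.nth (· ∈ A) k ∈ A := Nat.nth_mem_of_infinite hA
  have hcount : ∀ k, Nat.count (· ∈ A) (Nat.nth (· ∈ A) k) = k :=
    Nat.count_nth_of_infinite hA
  rw [body_agreeOffTree, body_agreeOffTree]
  ext y
  constructor
  · rintro ⟨x, hx, rfl⟩ n hn
    by_cases hnA : n ∈ A
    · have hB : Nat.count (· ∈ A) n ∉ B := fun hB => hn ⟨_, hB, Nat.nth_count hnA⟩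
      simp only [spreadAlong, hnA, if_true]
      exact hx _ hB
    · simp [spreadAlong, hnA]
  · intro hy
    refine ⟨fun k => y (Nat.nth (· ∈ A) k), fun k hk => ?_, funext fun n => ?_⟩
    · have hkB : Nat.nth (· ∈ A) k ∉ Nat.nth (· ∈ A) '' B :=
        fun ⟨k', hk', heq⟩ => hk (Nat.nth_injective hA heq ▸ hk')
      simpa [spreadAlong, hnth k, hcount k] using hy _ hkB
    · by_cases hnA : n ∈ A
      · simp [spreadAlong, hnA, Nat.nth_count hnA]
      · have hnB : n ∉ Nat.nth (· ∈ A) '' B := fun ⟨k, _, hk⟩ => hnA (hk ▸ hnth k)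
        simpa [spreadAlong, hnA] using (hy n hnB).symm

lemma exists_isSilver_body_eq_image_spreadAlong (hA : A.Infinite) {S : Set (List Bool)}
    (hS : IsSilver S) :
    ∃ T' ⊆ agreeOffTree A g, IsSilver T' ∧ body T' = spreadAlong A g '' body S := by
  rw [hS.eq_agreeOffTree, image_spreadAlong_body_agreeOffTree hA]
  refine ⟨_, agreeOffTree_subset_agreeOffTree ?_ fun n hn => by simp [spreadAlong, hn],
    isSilver_agreeOffTree ?_, rfl⟩
  · rintro _ ⟨k, -, rfl⟩
    exact Nat.nth_mem_of_infinite hA k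
  · exact hS.splitLevels_infinite.image (Nat.nth_injective hA).injOn

end SpreadAlong

lemma image_subset_or_inter_eq_empty {α β : Type*} {f : α → β} {s : Set α} {X : Set β}
    (h : s ⊆ f ⁻¹' X ∨ s ∩ f ⁻¹' X = ∅) :
    f '' s ⊆ X ∨ f '' s ∩ X = ∅ := by
  rcases h with h | h
  · exact Or.inl (Set.image_subset_iff.2 h)
  · exact Or.inr (by rw [← Set.image_inter_preimage, h, Set.image_empty])

/-- For a topologically reasonable family `Θ`, every set in `Θ` is Silver measurable
iff for every `X ∈ Θ` there is a single Silver tree whose body is contained in `X`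
or disjoint from `X`. -/
theorem silverMeasurable_iff_global (Θ : Set (Set (ℕ → Bool)))
    (hΘ : TopReasonable Θ) :
    (∀ X ∈ Θ, SilverMeasurable X) ↔
      (∀ X ∈ Θ, ∃ T : Set (List Bool), IsSilver T ∧
        (body T ⊆ X ∨ body T ∩ X = ∅)) := by
  constructor
  · intro h X hX
    obtain ⟨T', hT', -, hc⟩ := h X hX (agreeOffTree Set.univ fun _ => false)
      (isSilver_agreeOffTree Set.infinite_univ)
    exact ⟨T', hT', hc⟩
  · intro hglob X hX T hT
    obtain ⟨S, hS, hcase⟩ := hglob _ (hΘ.1 X hX _ continuous_spreadAlong)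
    obtain ⟨T', hT'T, hT', hbody⟩ :=
      exists_isSilver_body_eq_image_spreadAlong hT.splitLevels_infinite hS
    exact ⟨T', hT', hT.eq_agreeOffTree ▸ hT'T, hbody ▸ image_subset_or_inter_eq_empty hcase⟩
end

section
/- Let Θ be a topologically reasonable family of subsets of ω^ω. Then every set in Θ is Miller measurable if and only if for every X ∈ Θ there exists a Miller tree T with [T] ⊆ X or [T] ∩ X = ∅. -/
/-- `T` is a tree of finite sequences of natural numbers: closed under initial segments. -/
def IsTreeN (T : Set (List ℕ)) : Prop :=
  ∀ t ∈ T, ∀ k : ℕ, t.take k ∈ T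

/-- The set of immediate successors of `t` in `T`. -/
def succs (T : Set (List ℕ)) (t : List ℕ) : Set ℕ :=
  { k | t ++ [k] ∈ T }

/-- `t` is a splitting node of `T`: it lies in `T` and has at least two
immediate successors in `T`. -/
def SplitNodeN (T : Set (List ℕ)) (t : List ℕ) : Prop :=
  t ∈ T ∧ ∃ k l : ℕ, k ≠ l ∧ k ∈ succs T t ∧ l ∈ succs T t

/-- `T` is a Miller (superperfect) tree: a nonempty tree in which every node
extends to a splitting node, and every splitting node has infinitely many
immediate successors. -/
def IsMiller (T : Set (List ℕ)) : Prop :=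
  IsTreeN T ∧ T.Nonempty ∧ (∀ t ∈ T, ∃ s, t <+: s ∧ SplitNodeN T s) ∧
  (∀ t : List ℕ, SplitNodeN T t → (succs T t).Infinite)

/-- The body `[T]` of a tree: all infinite branches whose finite initial
segments all lie in `T`. -/
def bodyN (T : Set (List ℕ)) : Set (ℕ → ℕ) :=
  { x | ∀ n : ℕ, (List.ofFn fun i : Fin n => x i) ∈ T }

/-- `X ⊆ ω^ω` is Miller measurable: inside every Miller tree there is a Miller
subtree whose body is contained in `X` or disjoint from `X`. -/
def MillerMeasurable (X : Set (ℕ → ℕ)) : Prop :=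
  ∀ T : Set (List ℕ), IsMiller T →
    ∃ T' : Set (List ℕ), IsMiller T' ∧ T' ⊆ T ∧ (bodyN T' ⊆ X ∨ bodyN T' ∩ X = ∅)

/-- A family of subsets of Baire space is topologically reasonable if it is closed
under continuous preimages and under intersections with closed sets. -/
def TopReasonableN (Θ : Set (Set (ℕ → ℕ))) : Prop :=
  (∀ X ∈ Θ, ∀ f : (ℕ → ℕ) → (ℕ → ℕ), Continuous f → f ⁻¹' X ∈ Θ) ∧
  (∀ X ∈ Θ, ∀ C : Set (ℕ → ℕ), IsClosed C → X ∩ C ∈ Θ)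

/-!
Fix a Miller tree `T`. Sending `[]` to a splitting node of `T`, and `s ++ [n]` to a splitting node
above the `n`-th immediate successor of the image of `s`, embeds `ω^{<ω}` into `T` and induces a
continuous map `f : ω^ω → ω^ω`. For any Miller tree `S`, the nodes of `T` below images of nodes of
`S` form a Miller subtree of `T` whose body lies in `f '' [S]`: its splitting nodes are exactly the
images of splitting nodes of `S`, and a branch through it is traced back to a branch of `S`.
Applying the hypothesis to `f ⁻¹' X ∈ Θ` gives `S` with `[S]` inside or outside `f ⁻¹' X`, and the
corresponding subtree of `T` then has its body inside or outside `X`.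
-/

namespace List

variable {α : Type*} {s t u w : List α} {a b : α}

theorem eq_of_append_singleton_prefix (ha : u ++ [a] <+: w) (hb : u ++ [b] <+: w) : a = b := by
  rcases prefix_or_prefix_of_prefix ha hb with h | h <;> simp_all

theorem eq_of_prefix_of_length_eq (hs : s <+: w) (ht : t <+: w)
    (h : s.length = t.length) : s = t :=
  (prefix_of_prefix_length_le hs ht h.le).eq_of_length h

theorem eq_of_diverge {v w₁ w₂ : List α} {c d : α}
    (hua : u ++ [a] <+: w₁) (hub : u ++ [b] <+: w₂) (hab : a ≠ b)
    (hvc : v ++ [c] <+: w₁) (hvd : v ++ [d] <+: w₂) (hcd : c ≠ d) : u = v := by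
  have below : ∀ {x y l : List α} {z : α}, x ++ [z] <+: l → y <+: l →
      x.length < y.length → x ++ [z] <+: y :=
    fun hx hy hlt => prefix_of_prefix_length_le hx hy (by simpa using hlt)
  rcases lt_trichotomy u.length v.length with h | h | h
  · exact absurd (eq_of_append_singleton_prefix (below hua ((prefix_append _ _).trans hvc) h)
      (below hub ((prefix_append _ _).trans hvd) h)) hab
  · exact eq_of_prefix_of_length_eq ((prefix_append _ _).trans hua)
      ((prefix_append _ _).trans hvc) h
  · exact absurd (eq_of_append_singleton_prefix (below hvc ((prefix_append _ _).trans hua) h)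
      (below hvd ((prefix_append _ _).trans hub) h)) hcd

theorem IsPrefix.exists_append_singleton_prefix (h : s <+: t) (hne : s ≠ t) :
    ∃ a, s ++ [a] <+: t := by
  obtain ⟨_ | ⟨a, r⟩, rfl⟩ := h
  · simp at hne
  · exact ⟨a, by simp⟩

theorem exists_branch_of_not_prefix (hst : ¬s <+: t) (hts : ¬t <+: s) :
    ∃ p a b, a ≠ b ∧ p ++ [a] <+: s ∧ p ++ [b] <+: t := by
  induction s generalizing t with
  | nil => exact absurd nil_prefix hst
  | cons a s ih =>
    cases t with
    | nil => exact absurd nil_prefix hts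
    | cons b t =>
      by_cases hab : a = b
      · subst hab
        obtain ⟨p, c, d, hcd, hc, hd⟩ := ih (by simpa using hst) (by simpa using hts)
        exact ⟨a :: p, c, d, hcd, by simpa using hc, by simpa using hd⟩
      · exact ⟨[], a, b, hab, by simp, by simp⟩

end List

def initSeg (x : ℕ → ℕ) (n : ℕ) : List ℕ := List.ofFn fun i : Fin n => x i

@[simp] theorem length_initSeg (x : ℕ → ℕ) (n : ℕ) : (initSeg x n).length = n := by
  simp [initSeg]

theorem initSeg_succ (x : ℕ → ℕ) (n : ℕ) : initSeg x (n + 1) = initSeg x n ++ [x n] := by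
  rw [initSeg, List.ofFn_succ_last]
  rfl

theorem initSeg_prefix_initSeg (x : ℕ → ℕ) {m n : ℕ} (h : m ≤ n) : initSeg x m <+: initSeg x n := by
  induction n, h using Nat.le_induction with
  | base => exact List.prefix_refl _
  | succ n _ ih => exact ih.trans (initSeg_succ x n ▸ List.prefix_append _ _)

theorem getD_initSeg (x : ℕ → ℕ) {i n : ℕ} (h : i < n) : (initSeg x n).getD i 0 = x i := by
  simp [initSeg, h]

theorem exists_forall_initSeg {P : List ℕ → Prop} (h₀ : P []) (h : ∀ s, P s → ∃ n, P (s ++ [n])) :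
    ∃ x : ℕ → ℕ, ∀ m, P (initSeg x m) := by
  choose next hnext using h
  let seq : ℕ → {s // P s} := fun j =>
    Nat.rec ⟨[], h₀⟩ (fun _ s => ⟨s.1 ++ [next s.1 s.2], hnext s.1 s.2⟩) j
  refine ⟨fun j => next (seq j).1 (seq j).2, fun m => ?_⟩
  suffices initSeg (fun j => next (seq j).1 (seq j).2) m = (seq m).1 from this ▸ (seq m).2
  induction m with
  | zero => rfl
  | succ m ih => rw [initSeg_succ, ih]

theorem IsTreeN.mem_of_prefix {T : Set (List ℕ)} (hT : IsTreeN T) {s t : List ℕ} (h : s <+: t)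
    (ht : t ∈ T) : s ∈ T := by
  rw [List.prefix_iff_eq_take.1 h]
  exact hT t ht _

def imageTree (e : List ℕ → List ℕ) (S : Set (List ℕ)) : Set (List ℕ) :=
  {t | ∃ s ∈ S, t <+: e s}

theorem isTreeN_imageTree (e : List ℕ → List ℕ) (S : Set (List ℕ)) : IsTreeN (imageTree e S) :=
  fun t ⟨s, hs, hts⟩ n => ⟨s, hs, (List.take_prefix n t).trans hts⟩

theorem imageTree_subset {e : List ℕ → List ℕ} {T : Set (List ℕ)} (hT : IsTreeN T)
    (he : ∀ s, e s ∈ T) (S : Set (List ℕ)) : imageTree e S ⊆ T :=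
  fun _ ⟨s, _, hts⟩ => hT.mem_of_prefix hts (he s)

/-- The default `0` is never used when `e` is a split embedding, as then `n < (e s).length` for
every `s` of length `n + 1`. -/
def branchMap (e : List ℕ → List ℕ) (x : ℕ → ℕ) (n : ℕ) : ℕ :=
  (e (initSeg x (n + 1))).getD n 0

theorem continuous_branchMap (e : List ℕ → List ℕ) : Continuous (branchMap e) := by
  refine continuous_pi fun n => ?_
  have : (fun x => branchMap e x n) =
      (fun v : Fin (n + 1) → ℕ => (e (List.ofFn v)).getD n 0) ∘ fun x i => x i := rfl
  rw [this]
  exact continuous_of_discreteTopology.comp (continuous_pi fun i => continuous_apply _)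

structure IsSplitEmbedding (e : List ℕ → List ℕ) (k : List ℕ → ℕ → ℕ) : Prop where
  append_prefix : ∀ s n, e s ++ [k s n] <+: e (s ++ [n])
  injective : ∀ s, (k s).Injective

namespace IsSplitEmbedding

variable {e : List ℕ → List ℕ} {k : List ℕ → ℕ → ℕ} {S : Set (List ℕ)} {s t u : List ℕ}

theorem prefix_append (he : IsSplitEmbedding e k) (s : List ℕ) (n : ℕ) : e s <+: e (s ++ [n]) :=
  (List.prefix_append _ _).trans (he.append_prefix s n)

theorem length_lt (he : IsSplitEmbedding e k) (s : List ℕ) (n : ℕ) :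
    (e s).length < (e (s ++ [n])).length := by
  simpa using (he.append_prefix s n).length_le

theorem mono (he : IsSplitEmbedding e k) (h : s <+: t) : e s <+: e t := by
  induction t using List.reverseRecOn with
  | nil => rw [List.prefix_nil.1 h]
  | append_singleton t n ih =>
    rcases List.prefix_concat_iff.1 h with rfl | h
    · exact List.prefix_refl _
    · exact (ih h).trans (he.prefix_append t n)

theorem length_le (he : IsSplitEmbedding e k) (s : List ℕ) : s.length ≤ (e s).length := by
  induction s using List.reverseRecOn with
  | nil => simp
  | append_singleton s n ih => simpa using ih.trans_lt (he.length_lt s n)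

theorem prefix_or_prefix_of_prefix (he : IsSplitEmbedding e k) (h : e s <+: e t) :
    s <+: t ∨ t <+: s := by
  by_contra! hst
  obtain ⟨p, a, b, hab, ha, hb⟩ := List.exists_branch_of_not_prefix hst.1 hst.2
  exact hab <| he.injective p <| List.eq_of_append_singleton_prefix
    ((he.append_prefix p a).trans ((he.mono ha).trans h))
    ((he.append_prefix p b).trans (he.mono hb))

theorem prefix_iff (he : IsSplitEmbedding e k) : e s <+: e t ↔ s <+: t := by
  refine ⟨fun h => ?_, he.mono⟩
  rcases he.prefix_or_prefix_of_prefix h with hst | hts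
  · exact hst
  by_cases hne : t = s
  · exact hne ▸ List.prefix_refl _
  obtain ⟨a, ha⟩ := hts.exists_append_singleton_prefix hne
  exact absurd h.length_le (not_le.2 ((he.length_lt t a).trans_le (he.mono ha).length_le))

theorem exists_append_prefix (he : IsSplitEmbedding e k) {c : ℕ} (h : e s ++ [c] <+: e t) :
    ∃ n, c = k s n ∧ s ++ [n] <+: t := by
  have hst : s <+: t := he.prefix_iff.1 ((List.prefix_append _ _).trans h)
  have hne : s ≠ t := by rintro rfl; simpa using h.length_le
  obtain ⟨n, hn⟩ := hst.exists_append_singleton_prefix hne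
  exact ⟨n, List.eq_of_append_singleton_prefix h ((he.append_prefix s n).trans (he.mono hn)), hn⟩

theorem append_prefix_of_append_prefix (he : IsSplitEmbedding e k) {n : ℕ}
    (h : e s ++ [k s n] <+: e t) : s ++ [n] <+: t := by
  obtain ⟨m, hm, hmt⟩ := he.exists_append_prefix h
  rwa [he.injective s hm]

theorem mem_succs_imageTree (he : IsSplitEmbedding e k) {n : ℕ} (h : s ++ [n] ∈ S) :
    k s n ∈ succs (imageTree e S) (e s) :=
  ⟨s ++ [n], h, he.append_prefix s n⟩

theorem exists_eq_of_splitNode_imageTree (he : IsSplitEmbedding e k) (hS : IsTreeN S)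
    (h : SplitNodeN (imageTree e S) u) : ∃ p, u = e p ∧ SplitNodeN S p := by
  obtain ⟨-, a, b, hab, ⟨s₁, hs₁, ha⟩, ⟨s₂, hs₂, hb⟩⟩ := h
  have h₁₂ : ¬s₁ <+: s₂ := fun h =>
    hab (List.eq_of_append_singleton_prefix (ha.trans (he.mono h)) hb)
  have h₂₁ : ¬s₂ <+: s₁ := fun h =>
    hab (List.eq_of_append_singleton_prefix ha (hb.trans (he.mono h)))
  obtain ⟨p, n, m, hnm, hn, hm⟩ := List.exists_branch_of_not_prefix h₁₂ h₂₁
  have hpn : s₁ ∈ S → p ++ [n] ∈ S := hS.mem_of_prefix hn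
  refine ⟨p, List.eq_of_diverge ha hb hab
    ((he.append_prefix p n).trans (he.mono hn)) ((he.append_prefix p m).trans (he.mono hm))
    ((he.injective p).ne hnm), hS.mem_of_prefix (List.prefix_append _ _) (hpn hs₁),
    n, m, hnm, hpn hs₁, hS.mem_of_prefix hm hs₂⟩

theorem isMiller_imageTree (he : IsSplitEmbedding e k) (hS : IsMiller S) :
    IsMiller (imageTree e S) := by
  obtain ⟨hStree, ⟨s₀, hs₀⟩, hSsplit, hSinf⟩ := hS
  refine ⟨isTreeN_imageTree e S, ⟨e s₀, s₀, hs₀, List.prefix_refl _⟩, ?_, fun u hu => ?_⟩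
  · rintro t ⟨s, hs, hts⟩
    obtain ⟨s', hss', hs', a, b, hab, ha, hb⟩ := hSsplit s hs
    exact ⟨e s', hts.trans (he.mono hss'), ⟨s', hs', List.prefix_refl _⟩, k s' a, k s' b,
      (he.injective s').ne hab, he.mem_succs_imageTree ha, he.mem_succs_imageTree hb⟩
  · obtain ⟨p, rfl, hp⟩ := he.exists_eq_of_splitNode_imageTree hStree hu
    refine ((hSinf p hp).image (he.injective p).injOn).mono ?_
    rintro _ ⟨n, hn, rfl⟩
    exact he.mem_succs_imageTree hn

theorem bodyN_imageTree_subset (he : IsSplitEmbedding e k) (hS : IsTreeN S) :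
    bodyN (imageTree e S) ⊆ branchMap e '' bodyN S := by
  intro y hy
  have hy' : ∀ m, ∃ t ∈ S, initSeg y m <+: e t := hy
  -- `P s` says that `s` is an initial segment of the branch of `S` that `branchMap e` sends to `y`.
  let P : List ℕ → Prop := fun s => s ∈ S ∧ e s = initSeg y (e s).length
  have hP : ∀ {s t}, t ∈ S → s <+: t → initSeg y (e s).length <+: e t → P s :=
    fun ht hst hyt =>
      ⟨hS.mem_of_prefix hst ht, List.eq_of_prefix_of_length_eq (he.mono hst) hyt (by simp)⟩
  have h₀ : P [] := by
    obtain ⟨t, ht, hyt⟩ := hy' (e []).length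
    exact hP ht List.nil_prefix hyt
  have hstep : ∀ s, P s → ∃ n, P (s ++ [n]) := by
    rintro s ⟨-, hs⟩
    obtain ⟨t, -, hyt⟩ := hy' ((e s).length + 1)
    rw [initSeg_succ, ← hs] at hyt
    obtain ⟨n, hn, -⟩ := he.exists_append_prefix hyt
    have hseg : e s ++ [k s n] = initSeg y ((e s).length + 1) := by rw [initSeg_succ, ← hs, hn]
    obtain ⟨t', ht', hyt'⟩ := hy' (e (s ++ [n])).length
    refine ⟨n, hP ht' (he.append_prefix_of_append_prefix ?_) hyt'⟩
    rw [hseg]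
    exact (initSeg_prefix_initSeg y (he.length_lt s n)).trans hyt'
  obtain ⟨x, hx⟩ := exists_forall_initSeg h₀ hstep
  refine ⟨x, fun m => (hx m).1, funext fun n => ?_⟩
  have hlen : n < (e (initSeg x (n + 1))).length := by
    simpa using he.length_le (initSeg x (n + 1))
  rw [branchMap, (hx (n + 1)).2, getD_initSeg y hlen]

end IsSplitEmbedding

theorem IsMiller.nil_mem {T : Set (List ℕ)} (hT : IsMiller T) : [] ∈ T := by
  obtain ⟨t, ht⟩ := hT.2.1
  exact hT.1.mem_of_prefix List.nil_prefix ht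

theorem isMiller_univ : IsMiller (Set.univ : Set (List ℕ)) := by
  refine ⟨fun _ _ _ => trivial, ⟨[], trivial⟩,
    fun t _ => ⟨t, List.prefix_refl _, trivial, 0, 1, zero_ne_one, trivial, trivial⟩, fun t _ => ?_⟩
  simpa [succs] using Set.infinite_univ

noncomputable def splitAbove (T : Set (List ℕ)) (t : List ℕ) : List ℕ :=
  Classical.epsilon fun s => t <+: s ∧ SplitNodeN T s

noncomputable def succEnum (T : Set (List ℕ)) (t : List ℕ) : ℕ → ℕ :=
  Nat.nth (· ∈ succs T t)

/-- `millerEmbedding` with its argument reversed, so that structural recursion removes the last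
entry. -/
noncomputable def millerEmbeddingRev (T : Set (List ℕ)) : List ℕ → List ℕ
  | [] => splitAbove T []
  | n :: r => splitAbove T (millerEmbeddingRev T r ++ [succEnum T (millerEmbeddingRev T r) n])

noncomputable def millerEmbedding (T : Set (List ℕ)) (s : List ℕ) : List ℕ :=
  millerEmbeddingRev T s.reverse

theorem millerEmbedding_append_singleton (T : Set (List ℕ)) (s : List ℕ) (n : ℕ) :
    millerEmbedding T (s ++ [n]) =
      splitAbove T (millerEmbedding T s ++ [succEnum T (millerEmbedding T s) n]) := by
  simp [millerEmbedding, millerEmbeddingRev]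

namespace IsMiller

variable {T : Set (List ℕ)}

theorem splitAbove_spec (hT : IsMiller T) {t : List ℕ} (ht : t ∈ T) :
    t <+: splitAbove T t ∧ SplitNodeN T (splitAbove T t) :=
  Classical.epsilon_spec (hT.2.2.1 t ht)

theorem succEnum_mem_succs (hT : IsMiller T) {t : List ℕ} (ht : SplitNodeN T t) (n : ℕ) :
    succEnum T t n ∈ succs T t :=
  Nat.nth_mem_of_infinite (hT.2.2.2 t ht) n

theorem splitNode_millerEmbedding (hT : IsMiller T) (s : List ℕ) :
    SplitNodeN T (millerEmbedding T s) := by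
  induction s using List.reverseRecOn with
  | nil => exact (hT.splitAbove_spec hT.nil_mem).2
  | append_singleton s n ih =>
    rw [millerEmbedding_append_singleton]
    exact (hT.splitAbove_spec (hT.succEnum_mem_succs ih n)).2

theorem isSplitEmbedding_millerEmbedding (hT : IsMiller T) :
    IsSplitEmbedding (millerEmbedding T) fun s => succEnum T (millerEmbedding T s) where
  append_prefix s n := by
    rw [millerEmbedding_append_singleton]
    exact (hT.splitAbove_spec
      (hT.succEnum_mem_succs (hT.splitNode_millerEmbedding s) n)).1
  injective s := Nat.nth_injective (hT.2.2.2 _ (hT.splitNode_millerEmbedding s))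

theorem exists_isMiller_subset_bodyN_subset_image (hT : IsMiller T) {S : Set (List ℕ)}
    (hS : IsMiller S) : ∃ T', IsMiller T' ∧ T' ⊆ T ∧
      bodyN T' ⊆ branchMap (millerEmbedding T) '' bodyN S :=
  ⟨_, hT.isSplitEmbedding_millerEmbedding.isMiller_imageTree hS,
    imageTree_subset hT.1 (fun s => (hT.splitNode_millerEmbedding s).1) S,
    hT.isSplitEmbedding_millerEmbedding.bodyN_imageTree_subset hS.1⟩

end IsMiller

/-- For a topologically reasonable family `Θ` of subsets of Baire space, every set
in `Θ` is Miller measurable iff for every `X ∈ Θ` there is a single Miller tree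
whose body is contained in `X` or disjoint from `X`. -/
theorem millerMeasurable_iff_global (Θ : Set (Set (ℕ → ℕ)))
    (hΘ : TopReasonableN Θ) :
    (∀ X ∈ Θ, MillerMeasurable X) ↔
      (∀ X ∈ Θ, ∃ T : Set (List ℕ), IsMiller T ∧
        (bodyN T ⊆ X ∨ bodyN T ∩ X = ∅)) := by
  refine ⟨fun h X hX => ?_, fun h X hX T hT => ?_⟩
  · obtain ⟨T, hT, -, hTX⟩ := h X hX Set.univ isMiller_univ
    exact ⟨T, hT, hTX⟩
  · set f := branchMap (millerEmbedding T)
    obtain ⟨S, hS, hSX⟩ := h (f ⁻¹' X) (hΘ.1 X hX f (continuous_branchMap _))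
    obtain ⟨T', hT', hT'T, hT'S⟩ := hT.exists_isMiller_subset_bodyN_subset_image hS
    refine ⟨T', hT', hT'T, hSX.imp (fun hin => ?_) fun hout => ?_⟩
    · exact hT'S.trans (Set.image_subset_iff.2 hin)
    · refine Set.eq_empty_of_subset_empty ((Set.inter_subset_inter_left X hT'S).trans ?_)
      rw [← Set.image_inter_preimage, hout, Set.image_empty]
end

section
/- Let k ∈ ℕ and let σ be a function assigning to each n ∈ ℕ a set σ(n) of functions from I_n to {0,1} with |σ(n)| ≤ 2^{kn}. Then the set B = {x ∈ 2^ω : for all n, h_x(n) ∈ σ(n)} is a μ-null set, where μ is the uniform product probability measure on 2^ω (each coordinate an independent fair coin). -/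
/-! Covering argument: for every `N`, membership in the slalom set is decided by the first
`2^N - 1` bits, which are exactly the blocks `I_0, …, I_{N-1}`. At most `∏_{n<N} 2^{kn} ≤ 2^{kN²}`
of these prefixes are admissible, and each prefix cylinder has measure `2^{-(2^N - 1)}`. Since
`kN² = o(2^N)`, the slalom set has measure at most `2^{-M}` for every `M`. -/

open MeasureTheory
open scoped ENNReal

/-- The interval `I_n = [2^n − 1, 2^{n+1} − 1)` of the partition of `ℕ` has exactly
`2^n` elements; we identify the restriction `h_x(n) = x↾I_n` of `x ∈ 2^ω` to `I_n`
with the function `Fin (2^n) → Bool`, `i ↦ x (2^n − 1 + i)`. -/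
def hRes (x : ℕ → Bool) (n : ℕ) : Fin (2 ^ n) → Bool :=
  fun i => x (2 ^ n - 1 + (i : ℕ))

/-- The slalom set `B = {x ∈ 2^ω : ∀ n, h_x(n) ∈ σ(n)}`. -/
def slalomSet (σ : (n : ℕ) → Finset (Fin (2 ^ n) → Bool)) : Set (ℕ → Bool) :=
  { x | ∀ n : ℕ, hRes x n ∈ σ n }

section Cylinder

variable {β : Type*} [MeasurableSpace (ℕ → β)] {μ : Measure (ℕ → β)}

lemma measure_setOf_prefix_mem_le {L : ℕ} {c : ℝ≥0∞}
    (hcyl : ∀ v : Fin L → β, μ {x | ∀ i : Fin L, x i = v i} ≤ c) (A : Finset (Fin L → β)) :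
    μ {x | (fun i : Fin L => x i) ∈ A} ≤ A.card * c := by
  have hcover : {x : ℕ → β | (fun i : Fin L => x i) ∈ A} ⊆
      ⋃ v ∈ A, {x | ∀ i : Fin L, x i = v i} := fun x hx =>
    Set.mem_biUnion hx fun _ => rfl
  calc μ {x | (fun i : Fin L => x i) ∈ A}
      ≤ ∑ v ∈ A, μ {x | ∀ i : Fin L, x i = v i} :=
        (measure_mono hcover).trans (measure_biUnion_finset_le A _)
    _ ≤ A.card * c := by
        simpa only [nsmul_eq_mul] using Finset.sum_le_card_nsmul A _ c fun v _ => hcyl v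

lemma measure_cylinder_ofFn {c : ℝ≥0∞}
    (hcyl : ∀ s : List β, μ {x | ∀ i : Fin s.length, x i = s.get i} = c ^ s.length)
    {L : ℕ} (v : Fin L → β) : μ {x | ∀ i : Fin L, x i = v i} = c ^ L := by
  simpa only [List.length_ofFn, List.get_ofFn, Fin.forall_iff, Fin.cast] using hcyl (List.ofFn v)

end Cylinder

section Blocks

lemma two_pow_sub_one_add_lt {N n i : ℕ} (hn : n < N) (hi : i < 2 ^ n) :
    2 ^ n - 1 + i < 2 ^ N - 1 := by
  have : 2 ^ (n + 1) ≤ 2 ^ N := Nat.pow_le_pow_right two_pos hn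
  have := Nat.one_le_two_pow (n := n)
  rw [pow_succ] at *
  omega

lemma exists_two_pow_sub_one_add_eq {N j : ℕ} (hj : j < 2 ^ N - 1) :
    ∃ n < N, ∃ i < 2 ^ n, 2 ^ n - 1 + i = j := by
  set n := Nat.log 2 (j + 1)
  have hlow : 2 ^ n ≤ j + 1 := Nat.pow_log_le_self 2 j.succ_ne_zero
  have hhigh : j + 1 < 2 ^ (n + 1) := Nat.lt_pow_succ_log_self one_lt_two _
  have hnN : n < N := by
    by_contra! h
    have := Nat.pow_le_pow_right two_pos h
    omega
  rw [pow_succ] at hhigh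
  exact ⟨n, hnN, j + 1 - 2 ^ n, by omega, by omega⟩

/-- The word `v` of length `2^N - 1` is `v↾(I_0 ∪ ⋯ ∪ I_{N-1})`; this is its block `v↾I_n`. -/
def blockRes {N : ℕ} (v : Fin (2 ^ N - 1) → Bool) (n : Fin N) : Fin (2 ^ (n : ℕ)) → Bool :=
  fun i => v ⟨2 ^ (n : ℕ) - 1 + i, two_pow_sub_one_add_lt n.isLt i.isLt⟩

lemma blockRes_injective (N : ℕ) : Function.Injective (blockRes (N := N)) := by
  intro v w h
  funext ⟨j, hj⟩
  obtain ⟨n, hn, i, hi, rfl⟩ := exists_two_pow_sub_one_add_eq hj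
  exact congrFun (congrFun h ⟨n, hn⟩) ⟨i, hi⟩

variable (σ : (n : ℕ) → Finset (Fin (2 ^ n) → Bool)) (N : ℕ)

def admissiblePrefixes : Finset (Fin (2 ^ N - 1) → Bool) :=
  Finset.univ.filter fun v => ∀ n : Fin N, blockRes v n ∈ σ n

lemma slalomSet_subset_setOf_prefix_mem :
    slalomSet σ ⊆ {x | (fun i : Fin (2 ^ N - 1) => x i) ∈ admissiblePrefixes σ N} :=
  fun _ hx => Finset.mem_filter.2 ⟨Finset.mem_univ _, fun n => hx n⟩

lemma card_admissiblePrefixes_le :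
    (admissiblePrefixes σ N).card ≤ ∏ n : Fin N, (σ n).card := by
  rw [← Fintype.card_piFinset]
  refine Finset.card_le_card_of_injOn blockRes (fun v hv => ?_) (blockRes_injective N).injOn
  exact Fintype.mem_piFinset.2 (Finset.mem_filter.1 hv).2

lemma card_admissiblePrefixes_le_of_card_le {k : ℕ} (hσ : ∀ n, (σ n).card ≤ 2 ^ (k * n)) :
    (admissiblePrefixes σ N).card ≤ 2 ^ (k * N * N) := by
  calc (admissiblePrefixes σ N).card ≤ ∏ n : Fin N, (σ n).card := card_admissiblePrefixes_le σ N
    _ ≤ ∏ _n : Fin N, 2 ^ (k * N) := Finset.prod_le_prod' fun n _ =>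
        (hσ n).trans (Nat.pow_le_pow_right two_pos (Nat.mul_le_mul_left k n.isLt.le))
    _ = 2 ^ (k * N * N) := by rw [Finset.prod_const, Finset.card_univ, Fintype.card_fin, ← pow_mul]

end Blocks

lemma cube_le_two_pow {N : ℕ} (h : 10 ≤ N) : N ^ 3 ≤ 2 ^ N := by
  induction N, h using Nat.le_induction with
  | base => norm_num
  | succ n hn ih =>
    have : 10 * n ^ 2 ≤ n * n ^ 2 := Nat.mul_le_mul_right _ hn
    calc (n + 1) ^ 3 ≤ 2 * n ^ 3 := by nlinarith
      _ ≤ 2 ^ (n + 1) := by rw [pow_succ 2 n]; omega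

lemma exists_mul_mul_add_le_two_pow_sub_one (k M : ℕ) : ∃ N, k * N * N + M ≤ 2 ^ N - 1 := by
  set N := max 10 (k + M + 2)
  have h10 : 10 ≤ N := le_max_left _ _
  have hk : k + M + 2 ≤ N := le_max_right _ _
  refine ⟨N, ?_⟩
  have : k * N * N + M + 1 ≤ N ^ 3 :=
    calc k * N * N + M + 1 ≤ k * N * N + N * N := by nlinarith
      _ = (k + 1) * (N * N) := by ring
      _ ≤ N * (N * N) := Nat.mul_le_mul_right _ (by omega)
      _ = N ^ 3 := by ring
  have := cube_le_two_pow h10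
  omega

lemma ENNReal.two_pow_mul_inv_two_pow_le {a b M : ℕ} (h : a + M ≤ b) :
    (2 : ℝ≥0∞) ^ a * 2⁻¹ ^ b ≤ 2⁻¹ ^ M := by
  obtain ⟨c, rfl⟩ := Nat.exists_eq_add_of_le h
  rw [add_assoc, pow_add, ← mul_assoc, ← mul_pow,
    ENNReal.mul_inv_cancel two_ne_zero ENNReal.ofNat_ne_top, one_pow, one_mul, pow_add]
  exact mul_le_of_le_one_right' (pow_le_one₀ zero_le (ENNReal.inv_le_one.2 one_le_two))

lemma ENNReal.eq_zero_of_le_inv_two_pow {x : ℝ≥0∞} (h : ∀ M : ℕ, x ≤ 2⁻¹ ^ M) : x = 0 :=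
  nonpos_iff_eq_zero.1 <|
    ge_of_tendsto' (ENNReal.tendsto_pow_atTop_nhds_zero_of_lt_one (by norm_num)) h

theorem slalomSet_null_general (μ : MeasureTheory.Measure (ℕ → Bool))
    (hcyl : ∀ s : List Bool,
      μ { x : ℕ → Bool | ∀ i : Fin s.length, x i = s.get i } =
        (1 / 2 : ENNReal) ^ s.length)
    (k : ℕ) (σ : (n : ℕ) → Finset (Fin (2 ^ n) → Bool))
    (hσ : ∀ n : ℕ, (σ n).card ≤ 2 ^ (k * n)) :
    μ (slalomSet σ) = 0 := by
  rw [one_div] at hcyl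
  refine ENNReal.eq_zero_of_le_inv_two_pow fun M => ?_
  obtain ⟨N, hN⟩ := exists_mul_mul_add_le_two_pow_sub_one k M
  have hcard : ((admissiblePrefixes σ N).card : ℝ≥0∞) ≤ 2 ^ (k * N * N) := by
    exact_mod_cast card_admissiblePrefixes_le_of_card_le σ N hσ
  calc μ (slalomSet σ)
      ≤ μ {x | (fun i : Fin (2 ^ N - 1) => x i) ∈ admissiblePrefixes σ N} :=
        measure_mono (slalomSet_subset_setOf_prefix_mem σ N)
    _ ≤ (admissiblePrefixes σ N).card * 2⁻¹ ^ (2 ^ N - 1) :=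
        measure_setOf_prefix_mem_le (fun v => (measure_cylinder_ofFn hcyl v).le) _
    _ ≤ 2 ^ (k * N * N) * 2⁻¹ ^ (2 ^ N - 1) := by gcongr
    _ ≤ 2⁻¹ ^ M := ENNReal.two_pow_mul_inv_two_pow_le hN

/-- If `μ` is the uniform product probability measure on `2^ω` (the unique
probability measure giving each basic cylinder `[s]` measure `2^{-|s|}`), and
`σ(n)` is a set of at most `2^{kn}` functions `I_n → 2` for each `n`, then the
slalom set `B = {x : ∀ n, h_x(n) ∈ σ(n)}` is `μ`-null. -/
theorem slalomSet_null (μ : MeasureTheory.Measure (ℕ → Bool))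
    (hprob : MeasureTheory.IsProbabilityMeasure μ)
    (hcyl : ∀ s : List Bool,
      μ { x : ℕ → Bool | ∀ i : Fin s.length, x i = s.get i } =
        (1 / 2 : ENNReal) ^ s.length)
    (k : ℕ) (σ : (n : ℕ) → Finset (Fin (2 ^ n) → Bool))
    (hσ : ∀ n : ℕ, (σ n).card ≤ 2 ^ (k * n)) :
    μ (slalomSet σ) = 0 :=
  slalomSet_null_general μ hcyl k σ hσ
end

section
/- Let T be a Silver tree, k ∈ ℕ, and let σ be a function on [T] such that for every x ∈ [T], σ(x) : ℕ → (finite subsets of ℕ), with |σ(x)(n)| ≤ 2^{kn} for all x ∈ [T] and n ∈ ℕ, and such that for each n the map x ↦ σ(x)(n) is locally constant on [T] (continuous with respect to the discrete topology on finite subsets of ℕ). Then there exist a Silver tree T' ⊆ T and τ : ℕ → (finite subsets of ℕ) with |τ(n)| ≤ 2^{(k+1)n} for all n, such that for every x ∈ [T'] and every n, σ(x)(n) ⊆ τ(n). -/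
/-
A Silver tree is the tree of all binary sequences whose `i`-th bit lies in a fixed nonempty set
`B i ⊆ {0,1}`, with `B i = {0,1}` for infinitely many `i`. By compactness of `[T]`, each
`x ↦ σ(x)(n)` has a uniform modulus `m n`. Pick split levels `s 0 < s 1 < ⋯` with `m n ≤ s n`,
and let `T'` split only at these levels, following a fixed branch of `T` elsewhere. On `[T']`,
`σ(x)(n)` is then determined by the `n` bits `x (s 0), …, x (s (n-1))`, so it takes at most `2^n`
values, each of size at most `2^{kn}`; their union is `τ(n)`.
-/

open Set Filter PiNat

def productTree (B : ℕ → Set Bool) : Set (List Bool) :=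
  { t | ∀ i (h : i < t.length), t[i] ∈ B i }

def levelBits (T : Set (List Bool)) (n : ℕ) : Set Bool :=
  { b | ∃ t ∈ T, t.length = n ∧ t ++ [b] ∈ T }

open Classical in
def freeOnRange (s : ℕ → ℕ) (f : ℕ → Bool) (i : ℕ) : Set Bool :=
  if i ∈ range s then univ else {f i}

lemma body_mono {T T' : Set (List Bool)} (h : T ⊆ T') : body T ⊆ body T' :=
  fun _ hx n => h (hx n)

section productTree

variable {B : ℕ → Set Bool}

@[simp]
lemma nil_mem_productTree : [] ∈ productTree B := fun _ h => absurd h (Nat.not_lt_zero _)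

lemma append_mem_productTree_iff {t : List Bool} {b : Bool} :
    t ++ [b] ∈ productTree B ↔ t ∈ productTree B ∧ b ∈ B t.length := by
  constructor
  · intro h
    refine ⟨fun i hi => ?_, ?_⟩
    · have := h i (by simp; omega)
      rwa [List.getElem_append_left hi] at this
    · simpa using h t.length (by simp)
  · rintro ⟨ht, hb⟩ i hi
    simp only [List.length_append, List.length_singleton] at hi
    rcases lt_or_eq_of_le (Nat.le_of_lt_succ hi) with hlt | rfl
    · simpa [List.getElem_append_left hlt] using ht i hlt
    · simpa using hb

lemma productTree_mono {B' : ℕ → Set Bool} (h : B ≤ B') : productTree B ⊆ productTree B' :=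
  fun _ ht i hi => h i (ht i hi)

lemma isTree_productTree : IsTree (productTree B) := by
  intro t ht k i hi
  rw [List.getElem_take]
  exact ht i (by simp at hi; omega)

lemma body_productTree : body (productTree B) = univ.pi B := by
  ext x
  simp only [body, productTree, mem_ofPred_eq, mem_univ_pi, List.length_ofFn, List.getElem_ofFn]
  exact ⟨fun h i => h (i + 1) i (by omega), fun h _ i _ => h i⟩

lemma exists_prefix_mem_productTree_length_eq (hne : ∀ i, (B i).Nonempty)
    {t : List Bool} (ht : t ∈ productTree B) {p : ℕ} (hp : t.length ≤ p) :
    ∃ u ∈ productTree B, t <+: u ∧ u.length = p := by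
  choose g hg using hne
  refine ⟨t ++ List.ofFn fun j : Fin (p - t.length) => g (t.length + j), ?_,
    List.prefix_append _ _, by simp; omega⟩
  intro i hi
  simp only [List.length_append, List.length_ofFn] at hi
  rcases lt_or_ge i t.length with hlt | hge
  · simpa [List.getElem_append_left hlt] using ht i hlt
  · simpa [List.getElem_append_right hge, Nat.add_sub_cancel' hge] using hg (t.length + (i - t.length))

lemma isSilver_productTree (hne : ∀ i, (B i).Nonempty) (hfull : ∃ᶠ i in atTop, B i = univ) :
    IsSilver (productTree B) := by
  refine ⟨⟨isTree_productTree, ⟨[], nil_mem_productTree⟩, fun t ht => ?_⟩, ?_⟩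
  · obtain ⟨p, hp, hBp⟩ := frequently_atTop.1 hfull t.length
    obtain ⟨u, hu, htu, rfl⟩ := exists_prefix_mem_productTree_length_eq hne ht hp
    refine ⟨u, htu, hu, ?_, ?_⟩ <;> simp [append_mem_productTree_iff, hu, hBp]
  · intro s hs t ht hlen i
    simp [append_mem_productTree_iff, hs, ht, hlen]

end productTree

namespace IsSilver

variable {T : Set (List Bool)} (hT : IsSilver T)
include hT

lemma nil_mem_s12 : [] ∈ T := by
  obtain ⟨t, ht⟩ := hT.1.2.1
  simpa using hT.1.1 t ht 0

lemma exists_mem_length_eq_s12 (n : ℕ) : ∃ t ∈ T, t.length = n := by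
  induction n with
  | zero => exact ⟨[], hT.nil_mem_s12, rfl⟩
  | succ n ih =>
    obtain ⟨t, ht, rfl⟩ := ih
    obtain ⟨s, hts, -, hs, -⟩ := hT.1.2.2 t ht
    refine ⟨(s ++ [false]).take (t.length + 1), hT.1.1 _ hs _, ?_⟩
    simp only [List.length_take, List.length_append, List.length_singleton]
    have := hts.length_le
    omega

lemma append_mem_iff_s12 {t : List Bool} {b : Bool} :
    t ++ [b] ∈ T ↔ t ∈ T ∧ b ∈ levelBits T t.length := by
  refine ⟨fun h => ⟨?_, t, ?_, rfl, h⟩, fun ⟨ht, t', ht', hlen, hb⟩ => (hT.2 t' ht' t ht hlen b).1 hb⟩ <;>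
  simpa using hT.1.1 _ h t.length

lemma productTree_levelBits : productTree (levelBits T) = T := by
  ext t
  induction t using List.reverseRecOn with
  | nil => simpa using hT.nil_mem_s12
  | append_singleton t b ih => rw [append_mem_productTree_iff, hT.append_mem_iff_s12, ih]

lemma body_eq : body T = univ.pi (levelBits T) := by
  rw [← body_productTree, hT.productTree_levelBits]

lemma isCompact_body : IsCompact (body T) :=
  hT.body_eq ▸ isCompact_univ_pi fun _ => (toFinite _).isCompact

lemma levelBits_nonempty (n : ℕ) : (levelBits T n).Nonempty := by
  obtain ⟨t, ht, hlen⟩ := hT.exists_mem_length_eq_s12 (n + 1)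
  have hn : n < t.length := by omega
  refine ⟨t[n], t.take n, hT.1.1 t ht n, by simp; omega, ?_⟩
  rwa [← List.take_succ_eq_append_getElem hn, List.take_of_length_le (by omega)]

lemma frequently_levelBits_eq_univ : ∃ᶠ n in atTop, levelBits T n = univ := by
  refine frequently_atTop.2 fun l => ?_
  obtain ⟨t, ht, rfl⟩ := hT.exists_mem_length_eq_s12 l
  obtain ⟨s, hts, hs, hs0, hs1⟩ := hT.1.2.2 t ht
  refine ⟨s.length, hts.length_le, eq_univ_of_forall fun b => ⟨s, hs, rfl, ?_⟩⟩
  cases b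
  exacts [hs0, hs1]

end IsSilver

section freeOnRange

variable {s : ℕ → ℕ} {f : ℕ → Bool}

lemma isSilver_productTree_freeOnRange (hs : StrictMono s) :
    IsSilver (productTree (freeOnRange s f)) := by
  refine isSilver_productTree (fun i => ?_) (frequently_atTop.2 fun l => ⟨s l, hs.le_apply, ?_⟩)
  · unfold freeOnRange; split_ifs <;> simp
  · simp [freeOnRange]

lemma freeOnRange_le {B : ℕ → Set Bool} (hs : ∀ n, B (s n) = univ) (hf : ∀ i, f i ∈ B i) :
    freeOnRange s f ≤ B := by
  intro i b hb
  unfold freeOnRange at hb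
  split_ifs at hb with hi
  · obtain ⟨n, rfl⟩ := hi
    simp [hs n]
  · rw [mem_singleton_iff.1 hb]
    exact hf i

lemma eq_of_mem_pi_freeOnRange (hs : StrictMono s) {x y : ℕ → Bool}
    (hx : x ∈ univ.pi (freeOnRange s f)) (hy : y ∈ univ.pi (freeOnRange s f)) {n : ℕ}
    (hxy : ∀ j < n, x (s j) = y (s j)) {i : ℕ} (hi : i < s n) : x i = y i := by
  by_cases hrange : i ∈ range s
  · obtain ⟨j, rfl⟩ := hrange
    exact hxy j (hs.lt_iff_lt.1 hi)
  · have hxi := hx i (mem_univ i)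
    have hyi := hy i (mem_univ i)
    simp only [freeOnRange, if_neg hrange, mem_singleton_iff] at hxi hyi
    rw [hxi, hyi]

end freeOnRange

lemma IsCompact.exists_uniform_modulus {α β : Type*} [TopologicalSpace α] [DiscreteTopology α]
    {K : Set (ℕ → α)} (hK : IsCompact K) (g : (ℕ → α) → β)
    (hg : ∀ x ∈ K, ∃ m, ∀ y ∈ K, (∀ i < m, y i = x i) → g y = g x) :
    ∃ m, ∀ x ∈ K, ∀ y ∈ K, (∀ i < m, y i = x i) → g y = g x := by
  choose M hM using hg
  obtain ⟨t, ht⟩ := hK.elim_nhds_subcover' (fun x hx => cylinder x (M x hx))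
    fun x hx => (isOpen_cylinder _ x _).mem_nhds (self_mem_cylinder x _)
  refine ⟨t.sup fun z => M z z.2, fun x hx y hy hxy => ?_⟩
  obtain ⟨z, hzt, hxz⟩ := mem_iUnion₂.1 (ht hx)
  have hyx : y ∈ cylinder x (M z z.2) := cylinder_anti x (Finset.le_sup hzt) hxy
  have hyz : y ∈ cylinder z (M z z.2) := (mem_cylinder_iff_eq.1 hxz) ▸ hyx
  rw [hM z z.2 y hy hyz, hM z z.2 x hx hxz]

lemma exists_finset_superset_card_le_of_factorsThrough {X ι α : Type*} [Fintype ι]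
    [DecidableEq α] {S : Set X} (F : X → Finset α) (r : X → ι) {c : ℕ}
    (hc : ∀ x ∈ S, (F x).card ≤ c) (hr : ∀ x ∈ S, ∀ y ∈ S, r x = r y → F x = F y) :
    ∃ τ : Finset α, τ.card ≤ Fintype.card ι * c ∧ ∀ x ∈ S, F x ⊆ τ := by
  classical
  let G : ι → Finset α := fun i => if h : ∃ x ∈ S, r x = i then F h.choose else ∅
  refine ⟨Finset.univ.biUnion G, Finset.card_biUnion_le_card_mul _ _ _ fun i _ => ?_,
    fun x hx => ?_⟩
  · dsimp only [G]
    split_ifs with h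
    exacts [hc _ h.choose_spec.1, Nat.zero_le c]
  · have h : ∃ y ∈ S, r y = r x := ⟨x, hx, rfl⟩
    have hG : G (r x) = F x := by
      simp only [G, dif_pos h]
      exact hr _ h.choose_spec.1 x hx h.choose_spec.2
    exact hG ▸ Finset.subset_biUnion_of_mem G (Finset.mem_univ _)

/-- Fusion for Silver forcing preserving unreachability: if `σ` assigns, locally
constantly on `[T]`, slaloms of width `≤ 2^{kn}`, then some Silver subtree `T' ⊆ T`
admits a single slalom `τ` of width `≤ 2^{(k+1)n}` covering all `σ(x)`, `x ∈ [T']`. -/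
theorem silver_fusion_slalom (T : Set (List Bool)) (hT : IsSilver T) (k : ℕ)
    (σ : (ℕ → Bool) → ℕ → Finset ℕ)
    (hcard : ∀ x ∈ body T, ∀ n : ℕ, (σ x n).card ≤ 2 ^ (k * n))
    (hloc : ∀ n : ℕ, ∀ x ∈ body T, ∃ m : ℕ, ∀ y ∈ body T,
      (∀ i < m, y i = x i) → σ y n = σ x n) :
    ∃ T' : Set (List Bool), ∃ τ : ℕ → Finset ℕ,
      IsSilver T' ∧ T' ⊆ T ∧ (∀ n : ℕ, (τ n).card ≤ 2 ^ ((k + 1) * n)) ∧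
      ∀ x ∈ body T', ∀ n : ℕ, σ x n ⊆ τ n := by
  choose m hm using fun n => hT.isCompact_body.exists_uniform_modulus (σ · n) (hloc n)
  obtain ⟨s, hs, hs_full_ge⟩ := extraction_forall_of_frequently fun n =>
    hT.frequently_levelBits_eq_univ.and_eventually (eventually_ge_atTop (m n))
  choose f hf using hT.levelBits_nonempty
  have hT'T : productTree (freeOnRange s f) ⊆ T :=
    hT.productTree_levelBits ▸ productTree_mono (freeOnRange_le (fun n => (hs_full_ge n).1) hf)
  have hbody : body (productTree (freeOnRange s f)) ⊆ body T := body_mono hT'T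
  choose τ hτ_card hτ using fun n =>
    exists_finset_superset_card_le_of_factorsThrough (S := body (productTree (freeOnRange s f)))
      (σ · n) (fun x (j : Fin n) => x (s j)) (fun x hx => hcard x (hbody hx) n)
      fun x hx y hy hxy => hm n y (hbody hy) x (hbody hx) fun i hi =>
        eq_of_mem_pi_freeOnRange hs (body_productTree ▸ hx) (body_productTree ▸ hy)
          (fun j hj => congrFun hxy ⟨j, hj⟩) (hi.trans_le (hs_full_ge n).2)
  refine ⟨_, τ, isSilver_productTree_freeOnRange hs, hT'T, fun n => ?_, fun x hx n => hτ n x hx⟩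
  calc (τ n).card ≤ 2 ^ n * 2 ^ (k * n) := by simpa using hτ_card n
    _ = 2 ^ ((k + 1) * n) := by ring
end

section
/- For every b₁ ∈ B₁, the conditions (b₁, ⊤) and (⊤, φ₀(b₁)) are equivalent in 𝔹 ×_{φ₀} 𝔹: every element of 𝔹 ×_{φ₀} 𝔹 that lies below (b₁, ⊤) is compatible with (⊤, φ₀(b₁)), and every element of 𝔹 ×_{φ₀} 𝔹 that lies below (⊤, φ₀(b₁)) is compatible with (b₁, ⊤). -/
/-- `B` is a complete subalgebra of the complete Boolean algebra `𝔹`: it contains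
`⊥` and `⊤` and is closed under complements and under arbitrary suprema and infima. -/
def IsCompleteSubalgebra {𝔹 : Type*} [CompleteBooleanAlgebra 𝔹] (B : Set 𝔹) : Prop :=
  ⊥ ∈ B ∧ ⊤ ∈ B ∧ (∀ b ∈ B, bᶜ ∈ B) ∧ ∀ S : Set 𝔹, S ⊆ B → sSup S ∈ B ∧ sInf S ∈ B

/-- The projection of `b` to the complete subalgebra `B`: the least element of `B`
above `b`. -/
def proj {𝔹 : Type*} [CompleteBooleanAlgebra 𝔹] (B : Set 𝔹) (b : 𝔹) : 𝔹 :=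
  sInf { c | c ∈ B ∧ b ≤ c }

/-- The amalgamation `𝔹 ×_{φ₀} 𝔹 = {(b′,b″) : φ₀(π₁(b′)) ⊓ π₂(b″) ≠ ⊥}`, a subset
of `𝔹 × 𝔹` carrying the componentwise order. -/
def amalSet {𝔹 : Type*} [CompleteBooleanAlgebra 𝔹] (B₁ B₂ : Set 𝔹) (φ₀ : 𝔹 → 𝔹) :
    Set (𝔹 × 𝔹) :=
  { p | φ₀ (proj B₁ p.1) ⊓ proj B₂ p.2 ≠ ⊥ }

/-- Compatibility in `𝔹 ×_{φ₀} 𝔹`: a common lower bound inside `𝔹 ×_{φ₀} 𝔹`. -/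
def amalCompat {𝔹 : Type*} [CompleteBooleanAlgebra 𝔹] (B₁ B₂ : Set 𝔹) (φ₀ : 𝔹 → 𝔹)
    (p q : 𝔹 × 𝔹) : Prop :=
  ∃ r ∈ amalSet B₁ B₂ φ₀, r ≤ p ∧ r ≤ q

section AuxLemmas
variable {𝔹 : Type*} [CompleteBooleanAlgebra 𝔹]

lemma le_proj' (B : Set 𝔹) (b : 𝔹) : b ≤ proj B b :=
  le_sInf fun _ hc => hc.2

lemma proj_le' (B : Set 𝔹) {b c : 𝔹} (hc : c ∈ B) (h : b ≤ c) : proj B b ≤ c :=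
  sInf_le ⟨hc, h⟩

lemma proj_mem' {B : Set 𝔹} (hB : IsCompleteSubalgebra B) (b : 𝔹) : proj B b ∈ B :=
  (hB.2.2.2 _ (fun _ hc => hc.1)).2

lemma inf_mem' {B : Set 𝔹} (hB : IsCompleteSubalgebra B) {a b : 𝔹} (ha : a ∈ B) (hb : b ∈ B) :
    a ⊓ b ∈ B := by
  have := (hB.2.2.2 {a, b} (by intro x hx; rcases hx with rfl | rfl <;> assumption)).2
  rwa [sInf_pair] at this

lemma sup_mem' {B : Set 𝔹} (hB : IsCompleteSubalgebra B) {a b : 𝔹} (ha : a ∈ B) (hb : b ∈ B) :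
    a ⊔ b ∈ B := by
  have := (hB.2.2.2 {a, b} (by intro x hx; rcases hx with rfl | rfl <;> assumption)).1
  rwa [sSup_pair] at this

lemma proj_inf_ge {B : Set 𝔹} (hB : IsCompleteSubalgebra B) (b : 𝔹) {c : 𝔹} (hc : c ∈ B) :
    proj B b ⊓ c ≤ proj B (b ⊓ c) := by
  have h0 : b ≤ (b ⊓ c) ⊔ cᶜ := by
    have : (b ⊓ c) ⊔ cᶜ = (b ⊔ cᶜ) ⊓ (c ⊔ cᶜ) := sup_inf_right _ _ _
    rw [this]; simp
  have h1 : proj B b ≤ proj B (b ⊓ c) ⊔ cᶜ :=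
    proj_le' B (sup_mem' hB (proj_mem' hB _) (hB.2.2.1 c hc))
      (h0.trans (sup_le_sup_right (le_proj' B _) _))
  calc proj B b ⊓ c ≤ (proj B (b ⊓ c) ⊔ cᶜ) ⊓ c := inf_le_inf_right _ h1
    _ = proj B (b ⊓ c) ⊓ c ⊔ (cᶜ ⊓ c) := inf_sup_right _ _ _
    _ ≤ proj B (b ⊓ c) := by simp [inf_le_left]

lemma phi_inf' {B₁ B₂ : Set 𝔹} (hB₁ : IsCompleteSubalgebra B₁)
    (hB₂ : IsCompleteSubalgebra B₂) {φ₀ : 𝔹 → 𝔹}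
    (hbij : Set.BijOn φ₀ B₁ B₂)
    (hiso : ∀ a ∈ B₁, ∀ b ∈ B₁, (a ≤ b ↔ φ₀ a ≤ φ₀ b))
    {a b : 𝔹} (ha : a ∈ B₁) (hb : b ∈ B₁) : φ₀ (a ⊓ b) = φ₀ a ⊓ φ₀ b := by
  have hab : a ⊓ b ∈ B₁ := inf_mem' hB₁ ha hb
  refine le_antisymm (le_inf ((hiso _ hab _ ha).1 inf_le_left)
    ((hiso _ hab _ hb).1 inf_le_right)) ?_
  obtain ⟨c, hc, hceq⟩ := hbij.surjOn (inf_mem' hB₂ (hbij.mapsTo ha) (hbij.mapsTo hb))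
  rw [← hceq]
  refine (hiso c hc _ hab).1 (le_inf ?_ ?_)
  · exact (hiso c hc a ha).2 (by rw [hceq]; exact inf_le_left)
  · exact (hiso c hc b hb).2 (by rw [hceq]; exact inf_le_right)

end AuxLemmas

/-- For `b₁ ∈ B₁`, the conditions `(b₁, ⊤)` and `(⊤, φ₀(b₁))` are equivalent in the
amalgamation `𝔹 ×_{φ₀} 𝔹`: every element of `𝔹 ×_{φ₀} 𝔹` below the one is
compatible with the other. -/
theorem amalgamation_equivalent_conditions {𝔹 : Type*} [CompleteBooleanAlgebra 𝔹]
    (B₁ B₂ : Set 𝔹) (hB₁ : IsCompleteSubalgebra B₁) (hB₂ : IsCompleteSubalgebra B₂)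
    (φ₀ : 𝔹 → 𝔹) (hbij : Set.BijOn φ₀ B₁ B₂)
    (hiso : ∀ a ∈ B₁, ∀ b ∈ B₁, (a ≤ b ↔ φ₀ a ≤ φ₀ b))
    (b₁ : 𝔹) (hb₁ : b₁ ∈ B₁) :
    (∀ p ∈ amalSet B₁ B₂ φ₀, p ≤ (b₁, ⊤) →
      amalCompat B₁ B₂ φ₀ p (⊤, φ₀ b₁)) ∧
    (∀ p ∈ amalSet B₁ B₂ φ₀, p ≤ (⊤, φ₀ b₁) →
      amalCompat B₁ B₂ φ₀ p (b₁, ⊤)) := by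
  have hπ₁mem : ∀ b : 𝔹, proj B₁ b ∈ B₁ := proj_mem' hB₁
  constructor
  · rintro ⟨p₁, p₂⟩ hp hle
    have hp₁ : p₁ ≤ b₁ := hle.1
    refine ⟨(p₁, p₂ ⊓ φ₀ b₁), ?_, ⟨le_refl _, inf_le_left⟩, ⟨le_top, inf_le_right⟩⟩
    -- membership in amalSet
    have hπ₁le : proj B₁ p₁ ≤ b₁ := proj_le' B₁ hb₁ hp₁
    have hφle : φ₀ (proj B₁ p₁) ≤ φ₀ b₁ := (hiso _ (hπ₁mem p₁) _ hb₁).1 hπ₁le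
    have hkey : φ₀ (proj B₁ p₁) ⊓ proj B₂ p₂ ≤
        φ₀ (proj B₁ p₁) ⊓ proj B₂ (p₂ ⊓ φ₀ b₁) := by
      have hstep : φ₀ (proj B₁ p₁) ⊓ proj B₂ p₂ ≤
          φ₀ (proj B₁ p₁) ⊓ (proj B₂ p₂ ⊓ φ₀ b₁) :=
        le_inf inf_le_left (le_inf inf_le_right (inf_le_left.trans hφle))
      exact hstep.trans (inf_le_inf_left _ (proj_inf_ge hB₂ p₂ (hbij.mapsTo hb₁)))
    intro hbot
    exact hp (le_bot_iff.1 (hkey.trans (le_of_eq hbot)))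
  · rintro ⟨p₁, p₂⟩ hp hle
    have hp₂ : p₂ ≤ φ₀ b₁ := hle.2
    refine ⟨(p₁ ⊓ b₁, p₂), ?_, ⟨inf_le_left, le_refl _⟩, ⟨inf_le_right, le_top⟩⟩
    have hπ₂le : proj B₂ p₂ ≤ φ₀ b₁ := proj_le' B₂ (hbij.mapsTo hb₁) hp₂
    have h1 : proj B₁ p₁ ⊓ b₁ ≤ proj B₁ (p₁ ⊓ b₁) := proj_inf_ge hB₁ p₁ hb₁
    have h2 : φ₀ (proj B₁ p₁ ⊓ b₁) ≤ φ₀ (proj B₁ (p₁ ⊓ b₁)) :=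
      (hiso _ (inf_mem' hB₁ (hπ₁mem p₁) hb₁) _ (hπ₁mem _)).1 h1
    have h3 : φ₀ (proj B₁ p₁ ⊓ b₁) = φ₀ (proj B₁ p₁) ⊓ φ₀ b₁ :=
      phi_inf' hB₁ hB₂ hbij hiso (hπ₁mem p₁) hb₁
    have hkey : φ₀ (proj B₁ p₁) ⊓ proj B₂ p₂ ≤
        φ₀ (proj B₁ (p₁ ⊓ b₁)) ⊓ proj B₂ p₂ := by
      refine le_inf (le_trans ?_ h2) inf_le_right
      rw [h3]
      exact le_inf inf_le_left (inf_le_right.trans hπ₂le)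
    intro hbot
    exact hp (le_bot_iff.1 (hkey.trans (le_of_eq hbot)))
end

section
/- For every Silver tree S, the partially ordered set of all Silver trees T with T ⊆ S, ordered by inclusion, is order-isomorphic to the partially ordered set of all Silver trees, ordered by inclusion. -/
/-- level sets of a tree -/
def lvl (T : Set (List Bool)) (n : ℕ) : Set Bool :=
  {i | ∃ t ∈ T, t.length = n ∧ t ++ [i] ∈ T}

/-- tree from a code -/
def Tr (f : ℕ → Set Bool) : Set (List Bool) :=
  {t | ∀ n, (h : n < t.length) → t[n] ∈ f n}

lemma Tr_tree (f : ℕ → Set Bool) : IsTree (Tr f) := by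
  intro t ht k n h
  have h' : n < t.length := lt_of_lt_of_le h (by simp)
  simpa using ht n h'

lemma Tr_mono {f g : ℕ → Set Bool} (h : ∀ n, f n ⊆ g n) : Tr f ⊆ Tr g :=
  fun t ht n hn => h n (ht n hn)

lemma mem_Tr_append (f : ℕ → Set Bool) (t : List Bool) (i : Bool) :
    t ++ [i] ∈ Tr f ↔ t ∈ Tr f ∧ i ∈ f t.length := by
  constructor
  · intro h
    refine ⟨fun n hn => ?_, ?_⟩
    · have := h n (by simp; omega)
      rwa [List.getElem_append_left hn] at this
    · have := h t.length (by simp)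
      simpa using this
  · rintro ⟨h1, h2⟩ n hn
    rcases lt_or_eq_of_le (Nat.lt_succ_iff.mp (by simpa using hn)) with h | h
    · rw [List.getElem_append_left h]; exact h1 n h
    · subst h; simpa using h2

/-- a canonical node of each length in `Tr f`, given pointwise nonemptiness -/
lemma Tr_exists_len (f : ℕ → Set Bool) (hf : ∀ n, (f n).Nonempty)
    (t : List Bool) (ht : t ∈ Tr f) (m : ℕ) (hm : t.length ≤ m) :
    ∃ s ∈ Tr f, s.length = m ∧ t <+: s := by
  induction m with
  | zero =>
    refine ⟨t, ht, ?_, List.prefix_refl t⟩; omega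
  | succ m ih =>
    rcases Nat.lt_or_ge t.length (m+1) with h | h
    · obtain ⟨s, hs, hlen, hpre⟩ := ih (by omega)
      obtain ⟨i, hi⟩ := hf m
      refine ⟨s ++ [i], ?_, by simp [hlen], hpre.trans (List.prefix_append s [i])⟩
      rw [mem_Tr_append]
      exact ⟨hs, by rwa [hlen]⟩
    · have : t.length = m + 1 := le_antisymm hm h
      exact ⟨t, ht, this, List.prefix_refl t⟩

lemma Tr_silver (f : ℕ → Set Bool) (hf : ∀ n, (f n).Nonempty)
    (hsplit : ∀ n, ∃ m, n ≤ m ∧ f m = Set.univ) : IsSilver (Tr f) := by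
  have hnil : ([] : List Bool) ∈ Tr f := by intro n hn; simp at hn
  refine ⟨⟨Tr_tree f, ⟨[], hnil⟩, ?_⟩, ?_⟩
  · intro t ht
    obtain ⟨m, hm, hfm⟩ := hsplit t.length
    obtain ⟨s, hs, hlen, hpre⟩ := Tr_exists_len f hf t ht m hm
    refine ⟨s, hpre, hs, ?_, ?_⟩ <;>
    · rw [mem_Tr_append]
      exact ⟨hs, by rw [hlen, hfm]; trivial⟩
  · intro s hs t ht hlen i
    rw [mem_Tr_append, mem_Tr_append, hlen]
    simp [hs, ht]

lemma lvl_Tr (f : ℕ → Set Bool) (hf : ∀ n, (f n).Nonempty) : lvl (Tr f) = f := by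
  have hnil : ([] : List Bool) ∈ Tr f := by intro n hn; simp at hn
  funext n
  ext i
  constructor
  · rintro ⟨t, ht, hlen, hti⟩
    rw [mem_Tr_append] at hti
    rw [hlen] at hti
    exact hti.2
  · intro hi
    obtain ⟨s, hs, hlen, -⟩ := Tr_exists_len f hf [] hnil n (by simp)
    exact ⟨s, hs, hlen, (mem_Tr_append f s i).mpr ⟨hs, by rwa [hlen]⟩⟩

lemma silver_exists_len {T : Set (List Bool)} (hT : IsSilver T) (n : ℕ) :
    ∃ t ∈ T, t.length = n := by
  induction n with
  | zero =>
    obtain ⟨t, ht⟩ := hT.1.2.1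
    exact ⟨t.take 0, hT.1.1 t ht 0, by simp⟩
  | succ n ih =>
    obtain ⟨t, ht, hlen⟩ := ih
    obtain ⟨s, hpre, hsplit⟩ := hT.1.2.2 t ht
    refine ⟨(s ++ [true]).take (n+1), hT.1.1 _ hsplit.2.2 _, ?_⟩
    have : n + 1 ≤ s.length + 1 := by
      have := hpre.length_le; omega
    simp [List.length_take]; omega

lemma lvl_nonempty {T : Set (List Bool)} (hT : IsSilver T) (n : ℕ) :
    (lvl T n).Nonempty := by
  obtain ⟨t, ht, hlen⟩ := silver_exists_len hT (n+1)
  have htake : t.take n ∈ T := hT.1.1 t ht n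
  have hn : n < t.length := by omega
  refine ⟨t[n], t.take n, htake, by simp [List.length_take]; omega, ?_⟩
  have : t.take n ++ [t[n]] = t.take (n+1) := by
    rw [List.take_succ]
    simp [List.getElem?_eq_getElem hn]
  rw [this]
  exact hT.1.1 t ht (n+1)

lemma lvl_split {T : Set (List Bool)} (hT : IsSilver T) (n : ℕ) :
    ∃ m, n ≤ m ∧ lvl T m = Set.univ := by
  obtain ⟨t, ht, hlen⟩ := silver_exists_len hT n
  obtain ⟨s, hpre, hs, hs0, hs1⟩ := hT.1.2.2 t ht
  refine ⟨s.length, by have := hpre.length_le; omega, ?_⟩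
  apply Set.eq_univ_of_forall
  intro i
  cases i
  · exact ⟨s, hs, rfl, hs0⟩
  · exact ⟨s, hs, rfl, hs1⟩

lemma silver_eq_Tr {T : Set (List Bool)} (hT : IsSilver T) : T = Tr (lvl T) := by
  ext t
  constructor
  · intro ht n hn
    refine ⟨t.take n, hT.1.1 t ht n, by simp [List.length_take]; omega, ?_⟩
    have : t.take n ++ [t[n]] = t.take (n+1) := by
      rw [List.take_succ]; simp [List.getElem?_eq_getElem hn]
    rw [this]; exact hT.1.1 t ht (n+1)
  · induction t using List.reverseRecOn with
    | nil =>
      intro _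
      obtain ⟨u, hu⟩ := hT.1.2.1
      simpa using hT.1.1 u hu 0
    | append_singleton u i ih =>
      intro h
      rw [mem_Tr_append] at h
      obtain ⟨hu, hi⟩ := h
      obtain ⟨s, hsT, hslen, hsi⟩ := hi
      have huT : u ∈ T := ih hu
      exact (hT.2 s hsT u huT hslen i).mp hsi

lemma silver_subset_iff {T T' : Set (List Bool)} (hT : IsSilver T) (hT' : IsSilver T') :
    T ⊆ T' ↔ ∀ n, lvl T n ⊆ lvl T' n := by
  constructor
  · rintro h n i ⟨t, ht, hlen, hti⟩
    exact ⟨t, h ht, hlen, h hti⟩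
  · intro h
    rw [silver_eq_Tr hT, silver_eq_Tr hT']
    exact Tr_mono h

/-- codes of Silver trees -/
def SilverCode : Type :=
  {f : ℕ → Set Bool // (∀ n, (f n).Nonempty) ∧ ∀ n, ∃ m, n ≤ m ∧ f m = Set.univ}

instance : PartialOrder SilverCode := Subtype.partialOrder _

lemma SilverCode.le_def (f g : SilverCode) : f ≤ g ↔ ∀ n, f.1 n ⊆ g.1 n := by
  constructor
  · intro h n; exact h n
  · intro h; exact h

/-- The order isomorphism between Silver trees and their codes. -/
noncomputable def silverIso : {T : Set (List Bool) // IsSilver T} ≃o SilverCode where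
  toFun T := ⟨lvl T.1, lvl_nonempty T.2, lvl_split T.2⟩
  invFun f := ⟨Tr f.1, Tr_silver f.1 f.2.1 f.2.2⟩
  left_inv T := Subtype.ext (silver_eq_Tr T.2).symm
  right_inv f := Subtype.ext (lvl_Tr f.1 f.2.1)
  map_rel_iff' := by
    intro T T'
    rw [SilverCode.le_def]
    exact (silver_subset_iff T.2 T'.2).symm

lemma set_bool_eq_of_subset {s t : Set Bool} (hs : s.Nonempty) (hsub : s ⊆ t)
    (ht : t ≠ Set.univ) : s = t := by
  obtain ⟨b, hb⟩ := hs
  have hnb : ¬ (!b) ∈ t := by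
    intro h
    apply ht
    apply Set.eq_univ_of_forall
    intro i
    rcases Bool.eq_or_eq_not i b with h' | h'
    · subst h'; exact hsub hb
    · subst h'; exact h
  ext i
  rcases Bool.eq_or_eq_not i b with h' | h'
  · subst h'; simp [hb, hsub hb]
  · subst h'; simp [hnb]
    intro h; exact absurd (hsub h) hnb

lemma code_eq_of_le {cS g : SilverCode} (hg : g ≤ cS) {n : ℕ}
    (hn : cS.1 n ≠ Set.univ) : g.1 n = cS.1 n :=
  set_bool_eq_of_subset (g.2.1 n) (hg n) hn

/-- For every Silver tree `S`, the poset of Silver subtrees of `S` (ordered by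
inclusion) is order-isomorphic to the poset of all Silver trees (ordered by
inclusion). -/
theorem silver_below_iso (S : Set (List Bool)) (hS : IsSilver S) :
    Nonempty
      ({ T : Set (List Bool) // IsSilver T ∧ T ⊆ S } ≃o
        { T : Set (List Bool) // IsSilver T }) := by
  classical
  set cS : SilverCode := silverIso ⟨S, hS⟩ with hcS
  set A : Set ℕ := {n | cS.1 n = Set.univ} with hA
  have hAcof : ∀ n, ∃ m, n ≤ m ∧ m ∈ A := by
    intro n
    obtain ⟨m, hm, hu⟩ := cS.2.2 n
    exact ⟨m, hm, hu⟩
  have hAinf : A.Infinite := by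
    apply Set.infinite_of_not_bddAbove
    rintro ⟨b, hb⟩
    obtain ⟨m, hm, hmA⟩ := hAcof (b+1)
    have := hb hmA
    omega
  haveI := hAinf.to_subtype
  let e : ℕ ≃o A := Nat.Subtype.orderIsoOfNat A
  have ecoe_mono : StrictMono (fun k => ((e k : A) : ℕ)) := by
    intro a b hab
    exact Subtype.coe_lt_coe.mpr (e.lt_iff_lt.mpr hab)
  -- first iso: Silver subtrees of S ≃o codes below cS
  let iso1 : { T : Set (List Bool) // IsSilver T ∧ T ⊆ S } ≃o
      {g : SilverCode // g ≤ cS} :=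
    { toFun := fun T => ⟨silverIso ⟨T.1, T.2.1⟩,
        silverIso.map_rel_iff.mpr (T.2.2 : (⟨T.1, T.2.1⟩ : {T // IsSilver T}) ≤ ⟨S, hS⟩)⟩
      invFun := fun g => ⟨(silverIso.symm g.1).1, (silverIso.symm g.1).2, by
        have h : silverIso.symm g.1 ≤ silverIso.symm cS := silverIso.symm.monotone g.2
        have h2 : silverIso.symm cS = ⟨S, hS⟩ := OrderIso.symm_apply_apply _ _
        rw [h2] at h
        exact h⟩
      left_inv := fun T => by
        ext1
        show (silverIso.symm (silverIso ⟨T.1, T.2.1⟩)).1 = T.1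
        rw [silverIso.symm_apply_apply]
      right_inv := fun g => Subtype.ext (silverIso.apply_symm_apply g.1)
      map_rel_iff' := by
        intro T T'
        constructor
        · intro h
          exact (silverIso.map_rel_iff.mp h : T.1 ⊆ T'.1)
        · intro h
          exact silverIso.map_rel_iff.mpr (h : T.1 ⊆ T'.1) }
  -- second iso: codes below cS ≃o all codes
  have toFun_aux : ∀ g : {g : SilverCode // g ≤ cS}, ∀ n, ∃ m, n ≤ m ∧
      g.1.1 ((e m : A) : ℕ) = Set.univ := by
    intro g n
    obtain ⟨m, hm, hu⟩ := g.1.2.2 ((e n : A) : ℕ)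
    have hmA : m ∈ A := by
      have huniv : Set.univ ⊆ cS.1 m := le_trans hu.symm.le (g.2 m)
      exact Set.univ_subset_iff.mp huniv
    refine ⟨e.symm ⟨m, hmA⟩, ?_, ?_⟩
    · have : (e n : A) ≤ e (e.symm ⟨m, hmA⟩) := by
        rw [e.apply_symm_apply]
        exact Subtype.mk_le_mk.mpr hm |>.trans_eq rfl
      exact e.le_iff_le.mp this
    · rw [e.apply_symm_apply]; exact hu
  let inv_fn : SilverCode → (ℕ → Set Bool) := fun h n =>
    if hn : n ∈ A then h.1 (e.symm ⟨n, hn⟩) else cS.1 n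
  have inv_le : ∀ h : SilverCode, ∀ n, inv_fn h n ⊆ cS.1 n := by
    intro h n
    simp only [inv_fn]
    split
    · next hn => rw [(hn : cS.1 n = Set.univ)]; exact Set.subset_univ _
    · exact subset_rfl
  have inv_split : ∀ h : SilverCode, ∀ n, ∃ m, n ≤ m ∧ inv_fn h m = Set.univ := by
    intro h n
    obtain ⟨k, hk, hu⟩ := h.2.2 n
    refine ⟨((e k : A) : ℕ), hk.trans (ecoe_mono.le_apply), ?_⟩
    simp only [inv_fn]
    rw [dif_pos (e k).2, Subtype.coe_eta, e.symm_apply_apply]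
    exact hu
  let iso2 : {g : SilverCode // g ≤ cS} ≃o SilverCode :=
    { toFun := fun g => ⟨fun k => g.1.1 ((e k : A) : ℕ),
        fun k => g.1.2.1 _, toFun_aux g⟩
      invFun := fun h => ⟨⟨inv_fn h, fun n => by
          simp only [inv_fn]; split
          · exact h.2.1 _
          · exact cS.2.1 n, inv_split h⟩, inv_le h⟩
      left_inv := fun g => by
        apply Subtype.ext; apply Subtype.ext; funext n
        simp only [inv_fn]
        split
        · next hn => rw [e.apply_symm_apply]
        · next hn => exact (code_eq_of_le g.2 hn).symm
      right_inv := fun h => by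
        apply Subtype.ext; funext k
        simp only [inv_fn]
        rw [dif_pos (e k).2, Subtype.coe_eta, e.symm_apply_apply]
      map_rel_iff' := by
        intro g g'
        constructor
        · intro h
          have hh : ∀ k, g.1.1 ((e k : A) : ℕ) ⊆ g'.1.1 ((e k : A) : ℕ) := fun k => h k
          intro n
          show g.1.1 n ⊆ g'.1.1 n
          by_cases hn : n ∈ A
          · have := hh (e.symm ⟨n, hn⟩)
            rwa [e.apply_symm_apply] at this
          · rw [code_eq_of_le g.2 hn, code_eq_of_le g'.2 hn]
        · intro h k
          show g.1.1 _ ⊆ g'.1.1 _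
          exact h ((e k : A) : ℕ) }
  exact ⟨(iso1.trans iso2).trans silverIso.symm⟩
end
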